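/- arXiv:2306.16414 — 3 statements merged into one kernel-verified Lean document; each statement's English description precedes it below -/
import Mathlib

section
/- For every nonzero rational number n, there exist rational numbers u, v, w with u² + v² = w² and n = uv/2 if and only if there exist rational numbers x, y with y ≠ 0 and y² = x³ − n²x. -/
/-!
A right triangle `(u, v, w)` of area `n` and a point `(x, y)`, `y ≠ 0`, on `y² = x³ - n²x`
correspond through
`(x, y) = (n v / (w - u), 2 n² / (w - u))` and
`(u, v, w) = ((x² - n²) / y, 2 n x / y, (x² + n²) / y)`;
both directions are polynomial identities once the denominators are cleared.
-/

section RightTriangleCurve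

variable {K : Type*} [Field K]

theorem sub_ne_zero_of_sq_add_sq_eq_sq {u v w : K} (h : u ^ 2 + v ^ 2 = w ^ 2) (hv : v ≠ 0) :
    w - u ≠ 0 := by
  intro hwu
  rw [← sub_eq_zero.mp hwu, add_eq_left] at h
  exact hv (pow_eq_zero_iff two_ne_zero |>.mp h)

theorem sq_eq_cube_sub_of_sq_add_sq_eq_sq {n u v w : K} (h : u ^ 2 + v ^ 2 = w ^ 2)
    (harea : u * v = 2 * n) (hwu : w - u ≠ 0) :
    (2 * n ^ 2 / (w - u)) ^ 2 = (n * v / (w - u)) ^ 3 - n ^ 2 * (n * v / (w - u)) := by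
  field_simp
  linear_combination (-(n ^ 3) * v) * h - (2 * n ^ 3 * (w - u)) * harea

theorem sq_add_sq_eq_sq_div (n x y : K) :
    ((x ^ 2 - n ^ 2) / y) ^ 2 + (2 * n * x / y) ^ 2 = ((x ^ 2 + n ^ 2) / y) ^ 2 := by
  rw [div_pow, div_pow, div_pow, ← add_div]
  ring

theorem div_mul_div_eq_two_mul_of_sq_eq_cube_sub {n x y : K} (hy : y ≠ 0)
    (h : y ^ 2 = x ^ 3 - n ^ 2 * x) :
    (x ^ 2 - n ^ 2) / y * (2 * n * x / y) = 2 * n := by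
  field_simp
  linear_combination (-2 * n) * h

end RightTriangleCurve

/-- For every nonzero rational number `n`, there exist rational `u, v, w` with
`u² + v² = w²` and `n = uv/2` if and only if there is a rational point `(x, y)`
with `y ≠ 0` on the elliptic curve `y² = x³ - n²x`. -/
theorem congruent_iff_rationalPoint (n : ℚ) (hn : n ≠ 0) :
    (∃ u v w : ℚ, u ^ 2 + v ^ 2 = w ^ 2 ∧ n = u * v / 2) ↔
      (∃ x y : ℚ, y ≠ 0 ∧ y ^ 2 = x ^ 3 - n ^ 2 * x) := by
  constructor
  · rintro ⟨u, v, w, hpyth, hn_eq⟩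
    have harea : u * v = 2 * n := by rw [hn_eq]; ring
    have hv : v ≠ 0 := by rintro rfl; exact hn (by simpa using harea.symm)
    have hwu := sub_ne_zero_of_sq_add_sq_eq_sq hpyth hv
    exact ⟨_, _, by positivity, sq_eq_cube_sub_of_sq_add_sq_eq_sq hpyth harea hwu⟩
  · rintro ⟨x, y, hy, hcurve⟩
    refine ⟨_, _, _, sq_add_sq_eq_sq_div n x y, ?_⟩
    rw [div_mul_div_eq_two_mul_of_sq_eq_cube_sub hy hcurve]
    ring
end

section
/- For every fundamental discriminant D < 0, 12·H(D) − 8·H₂(D) − 9·H₃(D) + 6·H₆(D) = (1 − 2·χ₈(D) − 3·(D|3) + 6·χ₈(D)·(D|3))·H(D), where (D|3) is the Legendre symbol of D modulo 3 and χ₈(D) equals 1 if D ≡ ±1 (mod 8), −1 if D ≡ ±3 (mod 8), and 0 if D is even. -/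
/-- Integral binary quadratic forms `(A,B,C)` of discriminant `B² - 4AC = D` with `N ∣ A`. -/
def QSet (N : ℕ) (D : ℤ) : Set (ℤ × ℤ × ℤ) :=
  {f | f.2.1 ^ 2 - 4 * f.1 * f.2.2 = D ∧ (N : ℤ) ∣ f.1}

/-- Right action of `SL₂(ℤ)` on forms: `(Q·γ)(x,y) = Q(ax+by, cx+dy)`. -/
def actForm (f : ℤ × ℤ × ℤ) (γ : Matrix.SpecialLinearGroup (Fin 2) ℤ) : ℤ × ℤ × ℤ :=
  let a := (γ : Matrix (Fin 2) (Fin 2) ℤ) 0 0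
  let b := (γ : Matrix (Fin 2) (Fin 2) ℤ) 0 1
  let c := (γ : Matrix (Fin 2) (Fin 2) ℤ) 1 0
  let d := (γ : Matrix (Fin 2) (Fin 2) ℤ) 1 1
  (f.1 * a ^ 2 + f.2.1 * a * c + f.2.2 * c ^ 2,
   2 * f.1 * a * b + f.2.1 * (a * d + b * c) + 2 * f.2.2 * c * d,
   f.1 * b ^ 2 + f.2.1 * b * d + f.2.2 * d ^ 2)

/-- Orbit relation of `Γ₀(N)` on `QSet N D`. -/
def formRel (N : ℕ) (D : ℤ) (f g : QSet N D) : Prop :=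
  ∃ γ : CongruenceSubgroup.Gamma0 N,
    actForm (f : ℤ × ℤ × ℤ) (γ : Matrix.SpecialLinearGroup (Fin 2) ℤ) = (g : ℤ × ℤ × ℤ)

/-- The generalized Hurwitz class number `H_N(D)` (for `D < 0`): the sum over
the `Γ₀(N)`-orbits on `QSet N D` of `1/#(stabilizer of a representative)`.
(If there are no forms, the sum is over an empty type and equals `0`.) -/
noncomputable def hurwitzCN (N : ℕ) (D : ℤ) : ℚ :=
  ∑' o : Quot (formRel N D),
    1 / (Nat.card {γ : CongruenceSubgroup.Gamma0 N //
        actForm ((Quot.out o : QSet N D) : ℤ × ℤ × ℤ)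
            (γ : Matrix.SpecialLinearGroup (Fin 2) ℤ)
          = ((Quot.out o : QSet N D) : ℤ × ℤ × ℤ)} : ℚ)

/-- `D` is a fundamental discriminant, i.e. the discriminant of a quadratic
number field `ℚ(√D)`: either `D ≡ 1 (mod 4)` and `D` is squarefree, or
`D = 4d` with `d` squarefree and `d ≡ 2, 3 (mod 4)`. -/
def IsFundamentalDiscriminant (D : ℤ) : Prop :=
  (D % 4 = 1 ∧ Squarefree D) ∨
    (∃ d : ℤ, D = 4 * d ∧ Squarefree d ∧ (d % 4 = 2 ∨ d % 4 = 3))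

/-- The character `χ₈`: `χ₈(D) = 1` if `D ≡ ±1 (mod 8)`, `-1` if `D ≡ ±3 (mod 8)`,
and `0` if `D` is even. -/
def chi8 (D : ℤ) : ℤ :=
  if D % 2 = 0 then 0 else if D % 8 = 1 ∨ D % 8 = 7 then 1 else -1
open Matrix CongruenceSubgroup

abbrev SL2Z := Matrix.SpecialLinearGroup (Fin 2) ℤ

lemma sl2_det (γ : SL2Z) :
    (γ : Matrix (Fin 2) (Fin 2) ℤ) 0 0 * (γ : Matrix (Fin 2) (Fin 2) ℤ) 1 1
      - (γ : Matrix (Fin 2) (Fin 2) ℤ) 0 1 * (γ : Matrix (Fin 2) (Fin 2) ℤ) 1 0 = 1 := by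
  have := γ.property
  rwa [Matrix.det_fin_two] at this

lemma actForm_one (f : ℤ × ℤ × ℤ) : actForm f 1 = f := by
  obtain ⟨A, B, C⟩ := f
  simp only [actForm, Matrix.SpecialLinearGroup.coe_one, Matrix.one_apply]
  norm_num

lemma mul_entry (γ₁ γ₂ : SL2Z) (i j : Fin 2) :
    ((γ₁ * γ₂ : SL2Z) : Matrix (Fin 2) (Fin 2) ℤ) i j
      = (γ₁ : Matrix (Fin 2) (Fin 2) ℤ) i 0 * (γ₂ : Matrix (Fin 2) (Fin 2) ℤ) 0 j
        + (γ₁ : Matrix (Fin 2) (Fin 2) ℤ) i 1 * (γ₂ : Matrix (Fin 2) (Fin 2) ℤ) 1 j := by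
  simp [Matrix.SpecialLinearGroup.coe_mul, Matrix.mul_apply, Fin.sum_univ_two]

lemma actForm_mul (f : ℤ × ℤ × ℤ) (γ₁ γ₂ : SL2Z) :
    actForm f (γ₁ * γ₂) = actForm (actForm f γ₁) γ₂ := by
  obtain ⟨A, B, C⟩ := f
  simp only [actForm, mul_entry]
  refine Prod.ext ?_ (Prod.ext ?_ ?_) <;> simp <;> ring

lemma disc_actForm (f : ℤ × ℤ × ℤ) (γ : SL2Z) :
    (actForm f γ).2.1 ^ 2 - 4 * (actForm f γ).1 * (actForm f γ).2.2
      = f.2.1 ^ 2 - 4 * f.1 * f.2.2 := by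
  have h := sl2_det γ
  simp only [actForm]
  linear_combination (((γ : Matrix (Fin 2) (Fin 2) ℤ) 0 0 * (γ : Matrix (Fin 2) (Fin 2) ℤ) 1 1
      - (γ : Matrix (Fin 2) (Fin 2) ℤ) 0 1 * (γ : Matrix (Fin 2) (Fin 2) ℤ) 1 0 + 1)
      * (f.2.1 ^ 2 - 4 * f.1 * f.2.2)) * h
lemma mem_Gamma0_iff (N : ℕ) (γ : SL2Z) :
    γ ∈ Gamma0 N ↔ (N : ℤ) ∣ (γ : Matrix (Fin 2) (Fin 2) ℤ) 1 0 := by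
  rw [Gamma0_mem, ZMod.intCast_zmod_eq_zero_iff_dvd]

lemma mem_Gamma0_one (γ : SL2Z) : γ ∈ Gamma0 1 := by
  rw [mem_Gamma0_iff]; exact one_dvd _

lemma formRel_equiv (N : ℕ) (D : ℤ) : Equivalence (formRel N D) := by
  constructor
  · intro f; exact ⟨1, by simpa using actForm_one (f : ℤ × ℤ × ℤ)⟩
  · rintro f g ⟨γ, hγ⟩
    refine ⟨γ⁻¹, ?_⟩
    have hc : ((γ⁻¹ : Gamma0 N) : SL2Z) = ((γ : Gamma0 N) : SL2Z)⁻¹ := rfl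
    rw [hc, ← hγ, ← actForm_mul, mul_inv_cancel, actForm_one]
  · rintro f g h ⟨γ, hγ⟩ ⟨δ, hδ⟩
    refine ⟨γ * δ, ?_⟩
    have hc : ((γ * δ : Gamma0 N) : SL2Z) = ((γ : Gamma0 N) : SL2Z) * ((δ : Gamma0 N) : SL2Z) := rfl
    rw [hc, actForm_mul, hγ, hδ]

lemma quot_mk_eq_iff {N : ℕ} {D : ℤ} (f g : QSet N D) :
    Quot.mk (formRel N D) f = Quot.mk (formRel N D) g ↔ formRel N D f g := by
  rw [Quot.eq, (formRel_equiv N D).eqvGen_iff]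

private lemma aux_ring (A B C a b c d N α κ : ℤ) (hdet : a * d - b * c = 1)
    (hα : A = N * α) (hκ : c = N * κ) :
    A * a ^ 2 + B * a * c + C * c ^ 2 = N * (α * a ^ 2 + B * a * κ + C * c * κ)
    ∧ (2 * A * a * b + B * (a * d + b * c) + 2 * C * c * d) - B
        = 2 * N * (α * a * b + B * b * κ + C * κ * d) := by
  constructor
  · linear_combination a ^ 2 * hα + (B * a + C * c) * hκ
  · linear_combination B * hdet + (2 * a * b) * hα + (2 * B * b + 2 * C * d) * hκ

/-- closure of QSet under Γ₀(N) together with the B-mod-2N invariance -/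
lemma actForm_qset {N : ℕ} {D : ℤ} {f : ℤ × ℤ × ℤ} (hf : f ∈ QSet N D) (γ : SL2Z)
    (hγ : (N : ℤ) ∣ (γ : Matrix (Fin 2) (Fin 2) ℤ) 1 0) :
    actForm f γ ∈ QSet N D ∧ ((2 * N : ℕ) : ℤ) ∣ (actForm f γ).2.1 - f.2.1 := by
  obtain ⟨A, B, C⟩ := f
  obtain ⟨hdisc, hA⟩ := hf
  dsimp only at hdisc hA
  have hdet := sl2_det γ
  obtain ⟨α, hα⟩ := hA
  obtain ⟨κ, hκ⟩ := hγ
  have H := aux_ring A B C ((γ : Matrix (Fin 2) (Fin 2) ℤ) 0 0) ((γ : Matrix (Fin 2) (Fin 2) ℤ) 0 1)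
    ((γ : Matrix (Fin 2) (Fin 2) ℤ) 1 0) ((γ : Matrix (Fin 2) (Fin 2) ℤ) 1 1) N α κ hdet hα hκ
  refine ⟨⟨?_, ?_⟩, ?_⟩
  · rw [disc_actForm]; exact hdisc
  · exact ⟨α * (γ : Matrix (Fin 2) (Fin 2) ℤ) 0 0 ^ 2
        + B * (γ : Matrix (Fin 2) (Fin 2) ℤ) 0 0 * κ
        + C * (γ : Matrix (Fin 2) (Fin 2) ℤ) 1 0 * κ, H.1⟩
  · refine ⟨α * (γ : Matrix (Fin 2) (Fin 2) ℤ) 0 0 * (γ : Matrix (Fin 2) (Fin 2) ℤ) 0 1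
        + B * (γ : Matrix (Fin 2) (Fin 2) ℤ) 0 1 * κ
        + C * κ * (γ : Matrix (Fin 2) (Fin 2) ℤ) 1 1, ?_⟩
    have := H.2
    simp only [actForm]
    push_cast
    linear_combination this
def matT (t : ℤ) : SL2Z := ⟨!![1, t; 0, 1], by simp [Matrix.det_fin_two_of]⟩
def matS : SL2Z := ⟨!![0, -1; 1, 0], by simp [Matrix.det_fin_two_of]⟩

lemma actForm_matT (A B C t : ℤ) :
    actForm (A, B, C) (matT t) = (A, 2 * A * t + B, A * t ^ 2 + B * t + C) := by
  refine Prod.ext ?_ (Prod.ext ?_ ?_) <;> simp [actForm, matT] <;> ring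

lemma actForm_matS (A B C : ℤ) : actForm (A, B, C) matS = (C, -B, A) := by
  simp [actForm, matS]

lemma exists_translate (A B : ℤ) (hA : A ≠ 0) : ∃ t : ℤ, |2 * A * t + B| ≤ |A| := by
  rcases lt_or_gt_of_ne hA with h | h
  · refine ⟨(B + |A|) / (2 * |A|), ?_⟩
    have h2 : (0:ℤ) < 2 * |A| := by positivity
    have := Int.emod_nonneg (B + |A|) (by omega : (2*|A|) ≠ 0)
    have h3 := Int.emod_lt_of_pos (B + |A|) h2
    have h4 := Int.emod_def (B + |A|) (2 * |A|)
    have habs : |A| = -A := abs_of_neg h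
    rw [habs] at h4 this h3 ⊢
    rw [abs_le]
    constructor <;> nlinarith [h4]
  · refine ⟨-((B + |A|) / (2 * |A|)), ?_⟩
    have h2 : (0:ℤ) < 2 * |A| := by positivity
    have := Int.emod_nonneg (B + |A|) (by omega : (2*|A|) ≠ 0)
    have h3 := Int.emod_lt_of_pos (B + |A|) h2
    have h4 := Int.emod_def (B + |A|) (2 * |A|)
    have habs : |A| = A := abs_of_pos h
    rw [habs] at h4 this h3 ⊢
    rw [abs_le]
    constructor <;> nlinarith [h4]

lemma qset_fst_ne_zero {D : ℤ} (hD : D < 0) {f : ℤ × ℤ × ℤ} (hf : f ∈ QSet 1 D) :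
    f.1 ≠ 0 := by
  intro h0
  obtain ⟨hdisc, -⟩ := hf
  rw [h0] at hdisc
  nlinarith [sq_nonneg f.2.1]

/-- every SL₂-class of a form of negative discriminant has a representative with
    bounded coefficients -/
lemma exists_reduced {D : ℤ} (hD : D < 0) (g : ℤ × ℤ × ℤ) (hg : g ∈ QSet 1 D) :
    ∃ f ∈ QSet 1 D, (∃ γ : SL2Z, actForm g γ = f) ∧
      |f.1| ≤ D ^ 2 - D ∧ |f.2.1| ≤ D ^ 2 - D ∧ |f.2.2| ≤ D ^ 2 - D := by
  classical
  set T : Set ℕ := {n | ∃ γ : SL2Z, (actForm g γ).1.natAbs = n} with hT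
  have hTne : T.Nonempty := ⟨g.1.natAbs, 1, by rw [actForm_one]⟩
  obtain ⟨γ₀, hγ₀⟩ := Nat.sInf_mem hTne
  set f₁ := actForm g γ₀ with hf₁
  have hf₁Q : f₁ ∈ QSet 1 D := (actForm_qset hg γ₀ (one_dvd _)).1
  have hne : f₁.1 ≠ 0 := qset_fst_ne_zero hD hf₁Q
  obtain ⟨t, ht⟩ := exists_translate f₁.1 f₁.2.1 hne
  set f₂ := actForm g (γ₀ * matT t) with hf₂
  have hf₂e : f₂ = (f₁.1, 2 * f₁.1 * t + f₁.2.1, f₁.1 * t ^ 2 + f₁.2.1 * t + f₁.2.2) := by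
    rw [hf₂, actForm_mul, ← hf₁, ← actForm_matT]
  have hf₂Q : f₂ ∈ QSet 1 D := (actForm_qset hg _ (one_dvd _)).1
  have hB2 : |f₂.2.1| ≤ |f₂.1| := by rw [hf₂e]; exact ht
  -- minimality
  have hmin : ∀ γ : SL2Z, f₂.1.natAbs ≤ (actForm g γ).1.natAbs := by
    intro γ
    have h1 : f₂.1.natAbs = sInf T := by
      rw [hf₂e]
      simp only
      rw [← hγ₀]
    rw [h1]
    exact Nat.sInf_le ⟨γ, rfl⟩
  have hC2 : |f₂.1| ≤ |f₂.2.2| := by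
    have h3 : (actForm g (γ₀ * matT t * matS)).1 = f₂.2.2 := by
      rw [actForm_mul, ← hf₂]
      obtain ⟨A, B, C⟩ := f₂
      rw [actForm_matS]
    have h4 := hmin (γ₀ * matT t * matS)
    rw [h3] at h4
    rw [Int.abs_eq_natAbs, Int.abs_eq_natAbs]
    exact_mod_cast h4
  obtain ⟨A, B, C⟩ := f₂
  obtain ⟨hdisc, -⟩ := hf₂Q
  dsimp only at hdisc hB2 hC2
  have hA0 : A ≠ 0 := qset_fst_ne_zero hD (f := (A, B, C)) ⟨by exact hdisc, one_dvd _⟩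
  have h1 : 1 ≤ |A| := by rw [Int.abs_eq_natAbs]; omega
  have hACpos : 0 < A * C := by nlinarith [sq_nonneg B]
  have hac : |A| * |C| = A * C := by rw [← abs_mul]; exact abs_of_pos hACpos
  have p1 : |B| * |B| ≤ |A| * |A| := mul_self_le_mul_self (abs_nonneg _) hB2
  have p2 : |A| * |A| ≤ |A| * |C| := mul_le_mul_of_nonneg_left hC2 (abs_nonneg _)
  have p3 : |A| ≤ |A| * |A| := le_mul_of_one_le_left (abs_nonneg _) h1
  have p4 : |C| ≤ |A| * |C| := le_mul_of_one_le_left (abs_nonneg _) h1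
  have hBB : |B| * |B| = B ^ 2 := by rw [← abs_mul, abs_mul_self, sq]
  have hDD : 0 ≤ D ^ 2 := sq_nonneg D
  refine ⟨(A, B, C), ⟨hdisc, one_dvd _⟩, ⟨γ₀ * matT t, hf₂.symm⟩, ?_, ?_, ?_⟩ <;>
    dsimp only <;> nlinarith

lemma finite_quot1 {D : ℤ} (hD : D < 0) : Finite (Quot (formRel 1 D)) := by
  classical
  set K := D ^ 2 - D with hK
  set BS : Set (ℤ × ℤ × ℤ) :=
    {f | f ∈ QSet 1 D ∧ |f.1| ≤ K ∧ |f.2.1| ≤ K ∧ |f.2.2| ≤ K} with hBS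
  have hfin : BS.Finite := by
    apply Set.Finite.subset (((Set.finite_Icc (-K) K).prod
      ((Set.finite_Icc (-K) K).prod (Set.finite_Icc (-K) K))))
    rintro ⟨A, B, C⟩ ⟨-, h1, h2, h3⟩
    refine ⟨?_, ?_, ?_⟩ <;> simp only [Set.mem_Icc] <;> dsimp only at h1 h2 h3 <;>
      rw [abs_le] at * <;> omega
  haveI := hfin.to_subtype
  apply Finite.of_surjective (fun f : BS => Quot.mk (formRel 1 D) ⟨f.1, f.2.1⟩)
  intro o
  obtain ⟨g, rfl⟩ := Quot.exists_rep o
  obtain ⟨f, hfQ, ⟨γ, hγ⟩, hb1, hb2, hb3⟩ := exists_reduced hD g.1 g.2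
  refine ⟨⟨f, hfQ, hb1, hb2, hb3⟩, ?_⟩
  exact ((quot_mk_eq_iff ⟨f, hfQ⟩ g).mpr ((formRel_equiv 1 D).symm
    ⟨⟨γ, mem_Gamma0_one γ⟩, by exact hγ⟩))
private lemma zmod2_key : ∀ A B C a b c d : ZMod 2, A = 0 →
    A * a ^ 2 + B * a * c + C * c ^ 2 = 0 →
    A * a * b + B * b * c + C * c * d = 0 →
    a * d - b * c = 1 → (B = 1 ∨ C = 1) → c = 0 := by decide

private lemma zmod3_key : ∀ A B C a b c d : ZMod 3, A = 0 →
    A * a ^ 2 + B * a * c + C * c ^ 2 = 0 →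
    2 * A * a * b + B * (a * d + b * c) + 2 * C * c * d = B →
    a * d - b * c = 1 → (B * B - 4 * A * C ≠ 0 ∨ (B = 0 ∧ C ≠ 0)) → c = 0 := by decide

lemma fund_not_nine_dvd {D : ℤ} (h : IsFundamentalDiscriminant D) : ¬ (9 : ℤ) ∣ D := by
  rcases h with ⟨-, hsq⟩ | ⟨d, rfl, hsq, -⟩
  · intro ⟨k, hk⟩
    exact (fun hu => by norm_num [Int.isUnit_iff] at hu : ¬ IsUnit (3:ℤ)) (hsq 3 ⟨k, by linarith⟩)
  · intro h9
    have h9d : (9:ℤ) ∣ d := by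
      have : (9:ℤ) ∣ 9 * d := ⟨d, rfl⟩
      omega
    obtain ⟨k, hk⟩ := h9d
    exact (fun hu => by norm_num [Int.isUnit_iff] at hu : ¬ IsUnit (3:ℤ)) (hsq 3 ⟨k, by linarith⟩)

lemma fund_even {D : ℤ} (h : IsFundamentalDiscriminant D) (he : D % 2 = 0) :
    ∃ d : ℤ, D = 4 * d ∧ (d % 4 = 2 ∨ d % 4 = 3) := by
  rcases h with ⟨h4, -⟩ | ⟨d, rfl, -, hd⟩
  · omega
  · exact ⟨d, rfl, hd⟩

lemma fund_mod4 {D : ℤ} (h : IsFundamentalDiscriminant D) : D % 4 = 0 ∨ D % 4 = 1 := by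
  rcases h with ⟨h4, -⟩ | ⟨d, rfl, -, -⟩
  · omega
  · omega
section key
variable {D : ℤ}

private lemma zmod2_ne (x : ZMod 2) (h : x ≠ 0) : x = 1 := by revert x h; decide

lemma key_two (hfund : IsFundamentalDiscriminant D) {f g : ℤ × ℤ × ℤ}
    (hf : f ∈ QSet 2 D) (hg : g ∈ QSet 2 D) (γ : SL2Z) (hact : actForm f γ = g)
    (hB : (4 : ℤ) ∣ g.2.1 - f.2.1) : (2 : ℤ) ∣ (γ : Matrix (Fin 2) (Fin 2) ℤ) 1 0 := by
  obtain ⟨A, B, C⟩ := f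
  obtain ⟨hdisc, h2A⟩ := hf
  obtain ⟨hdisc', h2A'⟩ := hg
  have hdet := sl2_det γ
  set a := (γ : Matrix (Fin 2) (Fin 2) ℤ) 0 0 with ha
  set b := (γ : Matrix (Fin 2) (Fin 2) ℤ) 0 1 with hb'
  set c := (γ : Matrix (Fin 2) (Fin 2) ℤ) 1 0 with hc
  set d := (γ : Matrix (Fin 2) (Fin 2) ℤ) 1 1 with hd
  dsimp only at hdisc h2A
  have hga : A * a ^ 2 + B * a * c + C * c ^ 2 = g.1 := by rw [← hact]; rfl
  have hgb : 2 * A * a * b + B * (a * d + b * c) + 2 * C * c * d = g.2.1 := by rw [← hact]; rfl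
  have hmid : (2 : ℤ) ∣ (A * a * b + B * b * c + C * c * d) := by
    have hid : g.2.1 - B = 2 * (A * a * b + B * b * c + C * c * d) := by
      linear_combination B * hdet - hgb
    obtain ⟨k, hk⟩ := hB
    have := hid.symm.trans hk
    set x := A * a * b + B * b * c + C * c * d
    omega
  have e0 : ((A : ZMod 2)) = 0 := (ZMod.intCast_zmod_eq_zero_iff_dvd A 2).mpr h2A
  have e1 : (A : ZMod 2) * a ^ 2 + B * a * c + C * c ^ 2 = 0 := by
    have : ((g.1 : ℤ) : ZMod 2) = 0 := (ZMod.intCast_zmod_eq_zero_iff_dvd _ 2).mpr h2A'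
    rw [← hga] at this
    push_cast at this
    exact this
  have e2 : (A : ZMod 2) * a * b + B * b * c + C * c * d = 0 := by
    have : (((A * a * b + B * b * c + C * c * d : ℤ)) : ZMod 2) = 0 :=
      (ZMod.intCast_zmod_eq_zero_iff_dvd _ 2).mpr hmid
    push_cast at this
    exact this
  have e3 : (a : ZMod 2) * d - b * c = 1 := by exact_mod_cast congrArg (Int.cast : ℤ → ZMod 2) hdet
  have e4 : (B : ZMod 2) = 1 ∨ (C : ZMod 2) = 1 := by
    rcases Int.even_or_odd D with hD | hD
    · -- D even: C odd
      right
      obtain ⟨dd, hdd, hd4⟩ := fund_even hfund (Int.even_iff.mp hD)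
      have hBeven : (2:ℤ) ∣ B := by
        rcases Int.even_or_odd B with ⟨m0, hm0⟩ | hBo
        · exact ⟨m0, by omega⟩
        · exfalso
          obtain ⟨m, hm⟩ := hBo
          have : D = 4 * (m ^ 2 + m - A * C) + 1 := by rw [← hdisc, hm]; ring
          omega
      obtain ⟨m, hm⟩ := hBeven
      obtain ⟨α, hα⟩ := h2A
      apply zmod2_ne
      intro hC0
      have h2C : (2:ℤ) ∣ C := (ZMod.intCast_zmod_eq_zero_iff_dvd C 2).mp hC0
      obtain ⟨cc, hcc⟩ := h2C
      have hdd2 : dd = m ^ 2 - 4 * (α * cc) := by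
        have : 4 * dd = 4 * m ^ 2 - 16 * (α * cc) := by
          rw [← hdd, ← hdisc, hm, hα, hcc]; ring
        linarith
      rcases Int.even_or_odd m with ⟨n, hn⟩ | ⟨n, hn⟩
      · have : dd = 4 * (n * n - α * cc) := by rw [hdd2, hn]; ring
        omega
      · have : dd = 4 * (n * n + n - α * cc) + 1 := by rw [hdd2, hn]; ring
        omega
    · -- D odd: B odd
      left
      apply zmod2_ne
      intro hB0
      have h2B : (2:ℤ) ∣ B := (ZMod.intCast_zmod_eq_zero_iff_dvd B 2).mp hB0
      obtain ⟨m, hm⟩ := h2B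
      obtain ⟨k, hk⟩ := hD
      have : D = 2 * (2 * m ^ 2 - 2 * A * C) := by rw [← hdisc, hm]; ring
      omega
  have := zmod2_key A B C a b c d e0 e1 e2 e3 e4
  exact (ZMod.intCast_zmod_eq_zero_iff_dvd c 2).mp this
end key
private lemma zmod3_sq {x : ZMod 3} (h : x * x = 0) : x = 0 := by revert x h; decide

lemma key_three {D : ℤ} (hfund : IsFundamentalDiscriminant D) {f g : ℤ × ℤ × ℤ}
    (hf : f ∈ QSet 3 D) (hg : g ∈ QSet 3 D) (γ : SL2Z) (hact : actForm f γ = g)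
    (hB : (3 : ℤ) ∣ g.2.1 - f.2.1) : (3 : ℤ) ∣ (γ : Matrix (Fin 2) (Fin 2) ℤ) 1 0 := by
  obtain ⟨A, B, C⟩ := f
  obtain ⟨hdisc, h3A⟩ := hf
  obtain ⟨hdisc', h3A'⟩ := hg
  have hdet := sl2_det γ
  set a := (γ : Matrix (Fin 2) (Fin 2) ℤ) 0 0 with ha
  set b := (γ : Matrix (Fin 2) (Fin 2) ℤ) 0 1 with hb'
  set c := (γ : Matrix (Fin 2) (Fin 2) ℤ) 1 0 with hc
  set d := (γ : Matrix (Fin 2) (Fin 2) ℤ) 1 1 with hd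
  dsimp only at hdisc h3A
  have hga : A * a ^ 2 + B * a * c + C * c ^ 2 = g.1 := by rw [← hact]; rfl
  have hgb : 2 * A * a * b + B * (a * d + b * c) + 2 * C * c * d = g.2.1 := by rw [← hact]; rfl
  have e0 : ((A : ZMod 3)) = 0 := (ZMod.intCast_zmod_eq_zero_iff_dvd A 3).mpr h3A
  have e1 : (A : ZMod 3) * a ^ 2 + B * a * c + C * c ^ 2 = 0 := by
    have : ((g.1 : ℤ) : ZMod 3) = 0 := (ZMod.intCast_zmod_eq_zero_iff_dvd _ 3).mpr h3A'
    rw [← hga] at this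
    push_cast at this
    exact this
  have e2 : 2 * (A : ZMod 3) * a * b + B * (a * d + b * c) + 2 * C * c * d = B := by
    have h0 : (((g.2.1 - B : ℤ)) : ZMod 3) = 0 := (ZMod.intCast_zmod_eq_zero_iff_dvd _ 3).mpr hB
    have := congrArg (Int.cast : ℤ → ZMod 3) hgb
    push_cast at this h0 ⊢
    rw [this]
    linear_combination h0
  have e3 : (a : ZMod 3) * d - b * c = 1 := by exact_mod_cast congrArg (Int.cast : ℤ → ZMod 3) hdet
  have e4 : ((B : ZMod 3) * B - 4 * A * C ≠ 0) ∨ ((B : ZMod 3) = 0 ∧ (C : ZMod 3) ≠ 0) := by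
    by_cases h3D : (3:ℤ) ∣ D
    · right
      have h3B : (3:ℤ) ∣ B := by
        have h3sq : (3:ℤ) ∣ B ^ 2 := by
          obtain ⟨α, hα⟩ := h3A
          obtain ⟨δ, hδ⟩ := h3D
          exact ⟨δ + 4 * α * C, by linear_combination hdisc + hδ + 4 * C * hα⟩
        have hp : Prime (3:ℤ) := Int.prime_three
        exact hp.dvd_of_dvd_pow h3sq
      constructor
      · exact (ZMod.intCast_zmod_eq_zero_iff_dvd B 3).mpr h3B
      · intro hC0
        have h3C : (3:ℤ) ∣ C := (ZMod.intCast_zmod_eq_zero_iff_dvd C 3).mp hC0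
        obtain ⟨m, hm⟩ := h3B
        obtain ⟨α, hα⟩ := h3A
        obtain ⟨cc, hcc⟩ := h3C
        exact fund_not_nine_dvd hfund ⟨m ^ 2 - 4 * α * cc,
          by linear_combination - hdisc + (B + 3 * m) * hm - 4 * C * hα - 12 * α * hcc⟩
    · left
      intro h0
      apply h3D
      rw [← hdisc]
      have : ((B ^ 2 - 4 * A * C : ℤ) : ZMod 3) = 0 := by push_cast; linear_combination h0
      exact (ZMod.intCast_zmod_eq_zero_iff_dvd _ 3).mp this
  have := zmod3_key A B C a b c d e0 e1 e2 e3 e4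
  exact (ZMod.intCast_zmod_eq_zero_iff_dvd c 3).mp this
lemma exists_col (x y : ℤ) (h : IsCoprime x y) :
    ∃ γ : SL2Z, (γ : Matrix (Fin 2) (Fin 2) ℤ) 0 0 = x
      ∧ (γ : Matrix (Fin 2) (Fin 2) ℤ) 1 0 = y := by
  obtain ⟨u, v, huv⟩ := h
  refine ⟨⟨!![x, -v; y, u], ?_⟩, ?_, ?_⟩
  · rw [Matrix.det_fin_two_of]; linarith
  · rfl
  · rfl

lemma actForm_fst (f : ℤ × ℤ × ℤ) (γ : SL2Z) :
    (actForm f γ).1 = f.1 * ((γ : Matrix (Fin 2) (Fin 2) ℤ) 0 0) ^ 2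
      + f.2.1 * ((γ : Matrix (Fin 2) (Fin 2) ℤ) 0 0) * ((γ : Matrix (Fin 2) (Fin 2) ℤ) 1 0)
      + f.2.2 * ((γ : Matrix (Fin 2) (Fin 2) ℤ) 1 0) ^ 2 := rfl

lemma coprime_prime_of_not_dvd {p : ℕ} (hp : p.Prime) {v : ℤ} (h : ¬ (p:ℤ) ∣ v) :
    IsCoprime v (p : ℤ) := by
  rw [Int.isCoprime_iff_gcd_eq_one]
  have h1 : (Int.gcd v p) ∣ p := by
    have := Int.gcd_dvd_right (a := v) (b := (p:ℤ))
    exact_mod_cast this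
  rcases (Nat.Prime.eq_one_or_self_of_dvd hp _ h1) with h2 | h2
  · exact h2
  · exfalso
    apply h
    have := Int.gcd_dvd_left (a := v) (b := (p:ℤ))
    rw [h2] at this
    exact_mod_cast this

lemma surj_tail {N : ℕ} (hN : 0 < N) {D : ℤ} {g : ℤ × ℤ × ℤ} (hg : g ∈ QSet 1 D)
    (x y : ℤ) (hxy : IsCoprime x y)
    (hcop : IsCoprime (g.1 * x ^ 2 + g.2.1 * x * y + g.2.2 * y ^ 2) (N : ℤ))
    (b : ℤ) (hb : ((4 * N : ℕ) : ℤ) ∣ b ^ 2 - D) :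
    ∃ f ∈ QSet N D, (∃ γ : SL2Z, actForm g γ = f) ∧ ((2 * N : ℕ) : ℤ) ∣ f.2.1 - b := by
  obtain ⟨γ₁, hγa, hγc⟩ := exists_col x y hxy
  rcases h₁ : actForm g γ₁ with ⟨A₁, B₁, C₁⟩
  have hA₁ : A₁ = g.1 * x ^ 2 + g.2.1 * x * y + g.2.2 * y ^ 2 := by
    have := actForm_fst g γ₁
    rw [h₁, hγa, hγc] at this
    exact this
  have hcopA : IsCoprime A₁ (N : ℤ) := by rw [hA₁]; exact hcop
  have hdisc₁ : B₁ ^ 2 - 4 * A₁ * C₁ = D := by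
    have h := disc_actForm g γ₁
    rw [h₁] at h
    dsimp only at h
    rw [h]
    exact hg.1
  -- parity of b and B₁
  have h4b : (4 : ℤ) ∣ b ^ 2 - D := by
    refine dvd_trans ?_ hb
    have : ((4 * N : ℕ) : ℤ) = 4 * N := by push_cast; ring
    rw [this]
    exact ⟨N, by ring⟩
  have h4B : (4 : ℤ) ∣ B₁ ^ 2 - D := ⟨A₁ * C₁, by linarith [hdisc₁]⟩
  have hpar : (2 : ℤ) ∣ (-b - B₁) := by
    have h4' : (4:ℤ) ∣ b ^ 2 - B₁ ^ 2 := by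
      have := dvd_sub h4b h4B
      simpa using this
    rcases Int.even_or_odd b with ⟨s, hs⟩ | ⟨s, hs⟩ <;>
      rcases Int.even_or_odd B₁ with ⟨r, hr⟩ | ⟨r, hr⟩
    · exact ⟨-s - r, by omega⟩
    · exfalso
      have : b ^ 2 - B₁ ^ 2 = 4 * (s * s - r * r - r) - 1 := by rw [hs, hr]; ring
      rw [this] at h4'
      obtain ⟨k, hk⟩ := h4'
      set q1 := s * s - r * r - r
      omega
    · exfalso
      have : b ^ 2 - B₁ ^ 2 = 4 * (s * s + s - r * r) + 1 := by rw [hs, hr]; ring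
      rw [this] at h4'
      obtain ⟨k, hk⟩ := h4'
      set q1 := s * s + s - r * r
      omega
    · exact ⟨-s - r - 1, by omega⟩
  obtain ⟨m, hm⟩ := hpar
  obtain ⟨u, w, huw⟩ := hcopA
  set t := u * m with ht
  have hNt : (N : ℤ) ∣ A₁ * t - m := ⟨-w * m, by linear_combination m * huw⟩
  set B₂ := 2 * A₁ * t + B₁ with hB₂
  set C₂ := A₁ * t ^ 2 + B₁ * t + C₁ with hC₂
  have hf₂ : actForm g (γ₁ * matT t) = (A₁, B₂, C₂) := by
    rw [actForm_mul, h₁, actForm_matT]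
  have hBmod : ((2 * N : ℕ) : ℤ) ∣ B₂ + b := by
    obtain ⟨k, hk⟩ := hNt
    refine ⟨k, ?_⟩
    push_cast
    linear_combination 2 * hk - hm
  have hdisc₂ : B₂ ^ 2 - 4 * A₁ * C₂ = D := by
    rw [hB₂, hC₂]
    linear_combination hdisc₁
  have hNC₂ : (N : ℤ) ∣ C₂ := by
    have h4NB : ((4 * N : ℕ) : ℤ) ∣ B₂ ^ 2 - b ^ 2 := by
      obtain ⟨k, hk⟩ := hBmod
      have h2 : (2:ℤ) ∣ B₂ - b := by
        refine ⟨(N : ℤ) * k - b, ?_⟩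
        push_cast at hk
        linarith
      obtain ⟨l, hl⟩ := h2
      refine ⟨k * l, ?_⟩
      have : B₂ ^ 2 - b ^ 2 = (B₂ + b) * (B₂ - b) := by ring
      rw [this, hk, hl]
      push_cast
      ring
    have h4ND : ((4 * N : ℕ) : ℤ) ∣ B₂ ^ 2 - D := by
      have := dvd_add h4NB hb
      simpa using this
    obtain ⟨q, hq⟩ := h4ND
    have hACq : A₁ * C₂ = N * q := by
      have h4 : 4 * (A₁ * C₂) = 4 * ((N : ℤ) * q) := by
        push_cast at hq
        linear_combination hq - hdisc₂
      linarith
    have hNAC : (N : ℤ) ∣ C₂ * A₁ := ⟨q, by linarith [hACq]⟩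
    have hcN : IsCoprime (N : ℤ) A₁ := ⟨w, u, by linarith [huw]⟩
    exact IsCoprime.dvd_of_dvd_mul_right hcN hNAC
  refine ⟨(C₂, -B₂, A₁), ⟨by dsimp only; linear_combination hdisc₂, hNC₂⟩, ?_, ?_⟩
  · refine ⟨γ₁ * matT t * matS, ?_⟩
    rw [actForm_mul, hf₂, actForm_matS]
  · dsimp only
    have : -B₂ - b = -(B₂ + b) := by ring
    rw [this]
    exact dvd_neg.mpr hBmod
lemma prim_two {D A B C : ℤ} (hfund : IsFundamentalDiscriminant D)
    (hdisc : B ^ 2 - 4 * A * C = D) : ¬((2:ℤ) ∣ A ∧ (2:ℤ) ∣ B ∧ (2:ℤ) ∣ C) := by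
  rintro ⟨⟨α, hα⟩, ⟨β, hβ⟩, ⟨γ', hγ⟩⟩
  rcases Int.even_or_odd D with ⟨k0, hk0⟩ | ⟨k0, hk0⟩
  · obtain ⟨dd, hdd, hd4⟩ := fund_even hfund (by omega)
    have h1 : dd = β ^ 2 - 4 * (α * γ') := by
      have : 4 * dd = 4 * β ^ 2 - 16 * (α * γ') := by
        rw [← hdd, ← hdisc, hα, hβ, hγ]; ring
      linarith
    rcases Int.even_or_odd β with ⟨n, hn⟩ | ⟨n, hn⟩
    · have : dd = 4 * (n * n - α * γ') := by rw [h1, hn]; ring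
      omega
    · have : dd = 4 * (n * n + n - α * γ') + 1 := by rw [h1, hn]; ring
      omega
  · have : D = 2 * (2 * β ^ 2 - 2 * A * C) := by rw [← hdisc, hβ]; ring
    omega

lemma prim_three {D A B C : ℤ} (hfund : IsFundamentalDiscriminant D)
    (hdisc : B ^ 2 - 4 * A * C = D) : ¬((3:ℤ) ∣ A ∧ (3:ℤ) ∣ B ∧ (3:ℤ) ∣ C) := by
  rintro ⟨⟨α, hα⟩, ⟨β, hβ⟩, ⟨γ', hγ⟩⟩
  exact fund_not_nine_dvd hfund ⟨β ^ 2 - 4 * (α * γ'),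
    by rw [← hdisc, hα, hβ, hγ]; ring⟩

lemma good_pair_two {D A B C : ℤ} (hfund : IsFundamentalDiscriminant D)
    (hdisc : B ^ 2 - 4 * A * C = D) :
    ∃ x y : ℤ, IsCoprime x y ∧ ¬ (2:ℤ) ∣ (A * x ^ 2 + B * x * y + C * y ^ 2) := by
  by_cases h2A : (2:ℤ) ∣ A
  · by_cases h2C : (2:ℤ) ∣ C
    · have h2B : ¬ (2:ℤ) ∣ B := fun h => prim_two hfund hdisc ⟨h2A, h, h2C⟩
      exact ⟨1, 1, ⟨1, 0, by norm_num⟩, by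
        have h : A * 1 ^ 2 + B * 1 * 1 + C * 1 ^ 2 = A + B + C := by ring
        rw [h]; omega⟩
    · exact ⟨0, 1, ⟨0, 1, by norm_num⟩, by
        have h : A * 0 ^ 2 + B * 0 * 1 + C * 1 ^ 2 = C := by ring
        rw [h]; omega⟩
  · exact ⟨1, 0, ⟨1, 0, by norm_num⟩, by
      have h : A * 1 ^ 2 + B * 1 * 0 + C * 0 ^ 2 = A := by ring
      rw [h]; omega⟩

lemma good_pair_three {D A B C : ℤ} (hfund : IsFundamentalDiscriminant D)
    (hdisc : B ^ 2 - 4 * A * C = D) :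
    ∃ x y : ℤ, IsCoprime x y ∧ ¬ (3:ℤ) ∣ (A * x ^ 2 + B * x * y + C * y ^ 2) := by
  by_cases h3A : (3:ℤ) ∣ A
  · by_cases h3C : (3:ℤ) ∣ C
    · have h3B : ¬ (3:ℤ) ∣ B := fun h => prim_three hfund hdisc ⟨h3A, h, h3C⟩
      exact ⟨1, 1, ⟨1, 0, by norm_num⟩, by
        have h : A * 1 ^ 2 + B * 1 * 1 + C * 1 ^ 2 = A + B + C := by ring
        rw [h]; omega⟩
    · exact ⟨0, 1, ⟨0, 1, by norm_num⟩, by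
        have h : A * 0 ^ 2 + B * 0 * 1 + C * 1 ^ 2 = C := by ring
        rw [h]; omega⟩
  · exact ⟨1, 0, ⟨1, 0, by norm_num⟩, by
      have h : A * 1 ^ 2 + B * 1 * 0 + C * 0 ^ 2 = A := by ring
      rw [h]; omega⟩

lemma good_pair_six {D A B C : ℤ} (hfund : IsFundamentalDiscriminant D)
    (hdisc : B ^ 2 - 4 * A * C = D) :
    ∃ x y : ℤ, IsCoprime x y ∧ ¬ (2:ℤ) ∣ (A * x ^ 2 + B * x * y + C * y ^ 2)
      ∧ ¬ (3:ℤ) ∣ (A * x ^ 2 + B * x * y + C * y ^ 2) := by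
  have sel2 : (¬ (2:ℤ) ∣ A) ∨ (¬ (2:ℤ) ∣ C) ∨ ((2:ℤ) ∣ A ∧ (2:ℤ) ∣ C ∧ ¬ (2:ℤ) ∣ B) := by
    by_cases h1 : (2:ℤ) ∣ A
    · by_cases h2 : (2:ℤ) ∣ C
      · exact Or.inr (Or.inr ⟨h1, h2, fun h => prim_two hfund hdisc ⟨h1, h, h2⟩⟩)
      · exact Or.inr (Or.inl h2)
    · exact Or.inl h1
  have sel3 : (¬ (3:ℤ) ∣ A) ∨ (¬ (3:ℤ) ∣ C) ∨ ((3:ℤ) ∣ A ∧ (3:ℤ) ∣ C ∧ ¬ (3:ℤ) ∣ B) := by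
    by_cases h1 : (3:ℤ) ∣ A
    · by_cases h2 : (3:ℤ) ∣ C
      · exact Or.inr (Or.inr ⟨h1, h2, fun h => prim_three hfund hdisc ⟨h1, h, h2⟩⟩)
      · exact Or.inr (Or.inl h2)
    · exact Or.inl h1
  rcases sel2 with h2 | h2 | h2 <;> rcases sel3 with h3 | h3 | h3
  · refine ⟨1, 0, ⟨1, 0, by norm_num⟩, ?_, ?_⟩ <;>
      · have h : A * 1 ^ 2 + B * 1 * 0 + C * 0 ^ 2 = 1 * A + 0 * B + 0 * C := by ring
        rw [h]
        first
        | (obtain ⟨hx1, hx2, hx3⟩ := h2; omega)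
        | (obtain ⟨hx1, hx2, hx3⟩ := h3; omega)
        | omega
  · refine ⟨3, 4, ⟨-1, 1, by norm_num⟩, ?_, ?_⟩ <;>
      · have h : A * 3 ^ 2 + B * 3 * 4 + C * 4 ^ 2 = 9 * A + 12 * B + 16 * C := by ring
        rw [h]
        first
        | (obtain ⟨hx1, hx2, hx3⟩ := h2; omega)
        | (obtain ⟨hx1, hx2, hx3⟩ := h3; omega)
        | omega
  · refine ⟨1, 4, ⟨1, 0, by norm_num⟩, ?_, ?_⟩ <;>
      · have h : A * 1 ^ 2 + B * 1 * 4 + C * 4 ^ 2 = 1 * A + 4 * B + 16 * C := by ring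
        rw [h]
        first
        | (obtain ⟨hx1, hx2, hx3⟩ := h2; omega)
        | (obtain ⟨hx1, hx2, hx3⟩ := h3; omega)
        | omega
  · refine ⟨4, 3, ⟨1, -1, by norm_num⟩, ?_, ?_⟩ <;>
      · have h : A * 4 ^ 2 + B * 4 * 3 + C * 3 ^ 2 = 16 * A + 12 * B + 9 * C := by ring
        rw [h]
        first
        | (obtain ⟨hx1, hx2, hx3⟩ := h2; omega)
        | (obtain ⟨hx1, hx2, hx3⟩ := h3; omega)
        | omega
  · refine ⟨0, 1, ⟨0, 1, by norm_num⟩, ?_, ?_⟩ <;>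
      · have h : A * 0 ^ 2 + B * 0 * 1 + C * 1 ^ 2 = 0 * A + 0 * B + 1 * C := by ring
        rw [h]
        first
        | (obtain ⟨hx1, hx2, hx3⟩ := h2; omega)
        | (obtain ⟨hx1, hx2, hx3⟩ := h3; omega)
        | omega
  · refine ⟨4, 1, ⟨0, 1, by norm_num⟩, ?_, ?_⟩ <;>
      · have h : A * 4 ^ 2 + B * 4 * 1 + C * 1 ^ 2 = 16 * A + 4 * B + 1 * C := by ring
        rw [h]
        first
        | (obtain ⟨hx1, hx2, hx3⟩ := h2; omega)
        | (obtain ⟨hx1, hx2, hx3⟩ := h3; omega)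
        | omega
  · refine ⟨1, 3, ⟨1, 0, by norm_num⟩, ?_, ?_⟩ <;>
      · have h : A * 1 ^ 2 + B * 1 * 3 + C * 3 ^ 2 = 1 * A + 3 * B + 9 * C := by ring
        rw [h]
        first
        | (obtain ⟨hx1, hx2, hx3⟩ := h2; omega)
        | (obtain ⟨hx1, hx2, hx3⟩ := h3; omega)
        | omega
  · refine ⟨3, 1, ⟨0, 1, by norm_num⟩, ?_, ?_⟩ <;>
      · have h : A * 3 ^ 2 + B * 3 * 1 + C * 1 ^ 2 = 9 * A + 3 * B + 1 * C := by ring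
        rw [h]
        first
        | (obtain ⟨hx1, hx2, hx3⟩ := h2; omega)
        | (obtain ⟨hx1, hx2, hx3⟩ := h3; omega)
        | omega
  · refine ⟨1, 1, ⟨1, 0, by norm_num⟩, ?_, ?_⟩ <;>
      · have h : A * 1 ^ 2 + B * 1 * 1 + C * 1 ^ 2 = 1 * A + 1 * B + 1 * C := by ring
        rw [h]
        first
        | (obtain ⟨hx1, hx2, hx3⟩ := h2; omega)
        | (obtain ⟨hx1, hx2, hx3⟩ := h3; omega)
        | omega
section rel
variable {N : ℕ} {D : ℤ}

/-- the solution-count type -/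
def Sol (N : ℕ) (D : ℤ) : Type :=
  {b : ZMod (2 * N) // ((4 * N : ℕ) : ℤ) ∣ ((b.val : ℤ) ^ 2 - D)}

lemma mem_qset_one {f : ℤ × ℤ × ℤ} (hf : f ∈ QSet N D) : f ∈ QSet 1 D :=
  ⟨hf.1, one_dvd _⟩

lemma sol_spec (hN : 0 < N) {f : ℤ × ℤ × ℤ} (hf : f ∈ QSet N D) :
    ((4 * N : ℕ) : ℤ) ∣ ((((f.2.1 : ℤ) : ZMod (2 * N)).val : ℤ) ^ 2 - D) := by
  haveI : NeZero (2 * N) := ⟨by omega⟩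
  have hval : (((f.2.1 : ℤ) : ZMod (2 * N)).val : ℤ) = f.2.1 % ((2 * N : ℕ) : ℤ) :=
    ZMod.val_intCast f.2.1
  have hmod : f.2.1 % ((2 * N : ℕ) : ℤ) = f.2.1 - ((2 * N : ℕ) : ℤ) * (f.2.1 / ((2 * N : ℕ) : ℤ)) :=
    Int.emod_def _ _
  obtain ⟨hdisc, α, hα⟩ := hf
  set q := f.2.1 / ((2 * N : ℕ) : ℤ) with hq
  refine ⟨α * f.2.2 - q * f.2.1 + N * q ^ 2, ?_⟩
  rw [hval, hmod]
  push_cast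
  linear_combination hdisc + 4 * f.2.2 * hα
end rel
section mainrel
variable {N : ℕ} {D : ℤ}

def KeyHyp (N : ℕ) (D : ℤ) : Prop :=
  ∀ f g : ℤ × ℤ × ℤ, f ∈ QSet N D → g ∈ QSet N D → ∀ γ : SL2Z, actForm f γ = g →
    ((2 * N : ℕ) : ℤ) ∣ g.2.1 - f.2.1 → (N : ℤ) ∣ (γ : Matrix (Fin 2) (Fin 2) ℤ) 1 0

def SurjHyp (N : ℕ) (D : ℤ) : Prop :=
  ∀ g ∈ QSet 1 D, ∀ b : ℤ, ((4 * N : ℕ) : ℤ) ∣ b ^ 2 - D →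
    ∃ f ∈ QSet N D, (∃ γ : SL2Z, actForm g γ = f) ∧ ((2 * N : ℕ) : ℤ) ∣ f.2.1 - b

variable (hN : 0 < N)

/-- The pair map on representatives. -/
noncomputable def phiRaw (hN : 0 < N) (f : QSet N D) : Quot (formRel 1 D) × Sol N D :=
  (Quot.mk _ ⟨f.1, mem_qset_one f.2⟩,
    ⟨((f.1.2.1 : ℤ) : ZMod (2 * N)), sol_spec hN f.2⟩)

lemma phiRaw_invariant (hN : 0 < N) (f g : QSet N D) (h : formRel N D f g) :
    phiRaw hN f = phiRaw hN g := by
  obtain ⟨γ, hγ⟩ := h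
  have hγN : (N : ℤ) ∣ ((γ : SL2Z) : Matrix (Fin 2) (Fin 2) ℤ) 1 0 :=
    (mem_Gamma0_iff N _).mp γ.2
  have hBf := (actForm_qset f.2 (γ : SL2Z) hγN).2
  rw [hγ] at hBf
  refine Prod.ext ?_ ?_
  · exact Quot.sound ⟨⟨(γ : SL2Z), mem_Gamma0_one _⟩, hγ⟩
  · refine Subtype.ext ?_
    show ((f.1.2.1 : ℤ) : ZMod (2 * N)) = ((g.1.2.1 : ℤ) : ZMod (2 * N))
    rw [ZMod.intCast_eq_intCast_iff]
    exact Int.modEq_iff_dvd.mpr (by exact_mod_cast hBf)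

noncomputable def phiMap (hN : 0 < N) : Quot (formRel N D) → Quot (formRel 1 D) × Sol N D :=
  Quot.lift (phiRaw hN) (phiRaw_invariant hN)

lemma phiMap_bijective (hN : 0 < N) (hkey : KeyHyp N D) (hsurj : SurjHyp N D) :
    Function.Bijective (phiMap (D := D) hN) := by
  haveI : NeZero (2 * N) := ⟨by omega⟩
  constructor
  · intro o o'
    obtain ⟨f, rfl⟩ := Quot.exists_rep o
    obtain ⟨g, rfl⟩ := Quot.exists_rep o'
    intro h
    have h1 : Quot.mk (formRel 1 D) ⟨f.1, mem_qset_one f.2⟩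
        = Quot.mk (formRel 1 D) ⟨g.1, mem_qset_one g.2⟩ := congrArg Prod.fst h
    have h2 : ((f.1.2.1 : ℤ) : ZMod (2 * N)) = ((g.1.2.1 : ℤ) : ZMod (2 * N)) :=
      congrArg (fun p : Quot (formRel 1 D) × Sol N D => p.2.1) h
    obtain ⟨γ, hγ⟩ := (quot_mk_eq_iff _ _).mp h1
    have hdvd : ((2 * N : ℕ) : ℤ) ∣ g.1.2.1 - f.1.2.1 := by
      have hmq := (ZMod.intCast_eq_intCast_iff _ _ _).mp h2
      have h3 := Int.ModEq.dvd hmq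
      first
      | exact_mod_cast h3
      | exact_mod_cast dvd_sub_comm.mp h3
    have hc : (N : ℤ) ∣ ((γ : SL2Z) : Matrix (Fin 2) (Fin 2) ℤ) 1 0 :=
      hkey f.1 g.1 f.2 g.2 (γ : SL2Z) hγ hdvd
    exact (quot_mk_eq_iff f g).mpr ⟨⟨(γ : SL2Z), (mem_Gamma0_iff N _).mpr hc⟩, hγ⟩
  · rintro ⟨o₁, b⟩
    obtain ⟨g, rfl⟩ := Quot.exists_rep o₁
    obtain ⟨f, hfQ, ⟨γ, hγ⟩, hdvd⟩ := hsurj g.1 g.2 (b.1.val : ℤ) b.2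
    refine ⟨Quot.mk _ ⟨f, hfQ⟩, Prod.ext ?_ (Subtype.ext ?_)⟩
    · show Quot.mk (formRel 1 D) _ = Quot.mk (formRel 1 D) g
      exact (quot_mk_eq_iff _ _).mpr ((formRel_equiv 1 D).symm
        ⟨⟨γ, mem_Gamma0_one γ⟩, hγ⟩)
    · show ((f.2.1 : ℤ) : ZMod (2 * N)) = b.1
      have h1 : ((f.2.1 : ℤ) : ZMod (2 * N)) = (((b.1.val : ℤ)) : ZMod (2 * N)) := by
        rw [ZMod.intCast_eq_intCast_iff]
        exact Int.ModEq.symm (Int.modEq_iff_dvd.mpr (by exact_mod_cast hdvd))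
      rw [h1]
      push_cast
      simp [ZMod.natCast_val, ZMod.cast_id]

lemma stab_card_eq (hkey : KeyHyp N D) (Q : QSet N D) (P : QSet 1 D) (δ : SL2Z)
    (hδ : actForm P.1 δ = Q.1) :
    Nat.card {γ : Gamma0 N // actForm (Q : ℤ × ℤ × ℤ) (γ : SL2Z) = (Q : ℤ × ℤ × ℤ)}
      = Nat.card {γ : Gamma0 1 // actForm (P : ℤ × ℤ × ℤ) (γ : SL2Z) = (P : ℤ × ℤ × ℤ)} := by
  have hQP : actForm Q.1 δ⁻¹ = P.1 := by
    rw [← hδ, ← actForm_mul, mul_inv_cancel, actForm_one]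
  have e1 : {γ : Gamma0 N // actForm (Q : ℤ × ℤ × ℤ) (γ : SL2Z) = (Q : ℤ × ℤ × ℤ)}
      ≃ {γ : Gamma0 1 // actForm (Q : ℤ × ℤ × ℤ) (γ : SL2Z) = (Q : ℤ × ℤ × ℤ)} :=
    { toFun := fun g => ⟨⟨(g.1 : SL2Z), mem_Gamma0_one _⟩, g.2⟩
      invFun := fun g => ⟨⟨(g.1 : SL2Z), (mem_Gamma0_iff N _).mpr
        (hkey Q.1 Q.1 Q.2 Q.2 (g.1 : SL2Z) g.2 (by simp))⟩, g.2⟩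
      left_inv := fun g => Subtype.ext (Subtype.ext rfl)
      right_inv := fun g => Subtype.ext (Subtype.ext rfl) }
  have e2 : {γ : Gamma0 1 // actForm (Q : ℤ × ℤ × ℤ) (γ : SL2Z) = (Q : ℤ × ℤ × ℤ)}
      ≃ {γ : Gamma0 1 // actForm (P : ℤ × ℤ × ℤ) (γ : SL2Z) = (P : ℤ × ℤ × ℤ)} :=
    { toFun := fun g => ⟨⟨δ * (g.1 : SL2Z) * δ⁻¹, mem_Gamma0_one _⟩, by
        show actForm P.1 (δ * (g.1 : SL2Z) * δ⁻¹) = P.1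
        rw [actForm_mul, actForm_mul, hδ, g.2, hQP]⟩
      invFun := fun g => ⟨⟨δ⁻¹ * (g.1 : SL2Z) * δ, mem_Gamma0_one _⟩, by
        show actForm Q.1 (δ⁻¹ * (g.1 : SL2Z) * δ) = Q.1
        rw [actForm_mul, actForm_mul, hQP, g.2, hδ]⟩
      left_inv := fun g => Subtype.ext (Subtype.ext (by group))
      right_inv := fun g => Subtype.ext (Subtype.ext (by group)) }
  exact Nat.card_congr (e1.trans e2)

lemma hurwitz_rel (hN : 0 < N) (hD : D < 0) (hkey : KeyHyp N D) (hsurj : SurjHyp N D) :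
    hurwitzCN N D = (Nat.card (Sol N D) : ℚ) * hurwitzCN 1 D := by
  classical
  haveI : NeZero (2 * N) := ⟨by omega⟩
  haveI hfin1 : Finite (Quot (formRel 1 D)) := finite_quot1 hD
  haveI hfinSol : Finite (Sol N D) := by
    unfold Sol; infer_instance
  let E : Quot (formRel N D) ≃ Quot (formRel 1 D) × Sol N D :=
    Equiv.ofBijective _ (phiMap_bijective hN hkey hsurj)
  haveI hfinN : Finite (Quot (formRel N D)) := Finite.of_equiv _ E.symm
  haveI := Fintype.ofFinite (Quot (formRel N D))
  haveI := Fintype.ofFinite (Quot (formRel 1 D))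
  haveI := Fintype.ofFinite (Sol N D)
  set g1 : Quot (formRel 1 D) → ℚ := fun o =>
    1 / (Nat.card {γ : Gamma0 1 //
      actForm ((Quot.out o : QSet 1 D) : ℤ × ℤ × ℤ) (γ : SL2Z)
        = ((Quot.out o : QSet 1 D) : ℤ × ℤ × ℤ)} : ℚ) with hg1
  have hterm : ∀ o : Quot (formRel N D),
      (1 / (Nat.card {γ : Gamma0 N //
        actForm ((Quot.out o : QSet N D) : ℤ × ℤ × ℤ) (γ : SL2Z)
          = ((Quot.out o : QSet N D) : ℤ × ℤ × ℤ)} : ℚ)) = g1 (E o).1 := by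
    intro o
    set Q : QSet N D := Quot.out o with hQ
    have hEo : (E o).1 = Quot.mk (formRel 1 D) ⟨Q.1, mem_qset_one Q.2⟩ := by
      have : E o = phiMap hN (Quot.mk _ Q) := by rw [hQ, Quot.out_eq]; rfl
      rw [this]
      rfl
    set P : QSet 1 D := Quot.out (E o).1 with hP
    have hrel : formRel 1 D P ⟨Q.1, mem_qset_one Q.2⟩ := by
      rw [← quot_mk_eq_iff]
      rw [← hEo, hP, Quot.out_eq]
    obtain ⟨δ, hδ⟩ := hrel
    rw [hg1]
    dsimp only
    rw [stab_card_eq hkey Q P (δ : SL2Z) hδ]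
  unfold hurwitzCN
  rw [tsum_fintype, tsum_fintype]
  rw [Finset.sum_congr rfl (fun o _ => hterm o)]
  refine Eq.trans (Equiv.sum_comp E (fun p => g1 p.1)) ?_
  rw [Fintype.sum_prod_type]
  have hsum : ∀ a, (∑ _b : Sol N D, g1 a) = (Fintype.card (Sol N D) : ℚ) * g1 a := by
    intro a
    rw [Finset.sum_const, Finset.card_univ, nsmul_eq_mul]
  rw [Finset.sum_congr rfl (fun a _ => hsum a), ← Finset.mul_sum, Nat.card_eq_fintype_card]
end mainrel
lemma keyhyp_two {D : ℤ} (hfund : IsFundamentalDiscriminant D) : KeyHyp 2 D := by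
  intro f g hf hg γ hact hB
  exact key_two hfund hf hg γ hact (by exact_mod_cast hB)

lemma keyhyp_three {D : ℤ} (hfund : IsFundamentalDiscriminant D) : KeyHyp 3 D := by
  intro f g hf hg γ hact hB
  refine key_three hfund hf hg γ hact ?_
  have : ((2 * 3 : ℕ) : ℤ) = 3 * 2 := by norm_num
  exact dvd_trans ⟨2, by norm_num⟩ hB

lemma qset_six_two {D : ℤ} {f : ℤ × ℤ × ℤ} (hf : f ∈ QSet 6 D) : f ∈ QSet 2 D :=
  ⟨hf.1, dvd_trans (by norm_num) hf.2⟩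

lemma qset_six_three {D : ℤ} {f : ℤ × ℤ × ℤ} (hf : f ∈ QSet 6 D) : f ∈ QSet 3 D :=
  ⟨hf.1, dvd_trans (by norm_num) hf.2⟩

lemma keyhyp_six {D : ℤ} (hfund : IsFundamentalDiscriminant D) : KeyHyp 6 D := by
  intro f g hf hg γ hact hB
  have h2 : (2:ℤ) ∣ (γ : Matrix (Fin 2) (Fin 2) ℤ) 1 0 :=
    key_two hfund (qset_six_two hf) (qset_six_two hg) γ hact
      (dvd_trans ⟨3, by norm_num⟩ hB)
  have h3 : (3:ℤ) ∣ (γ : Matrix (Fin 2) (Fin 2) ℤ) 1 0 :=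
    key_three hfund (qset_six_three hf) (qset_six_three hg) γ hact
      (dvd_trans ⟨4, by norm_num⟩ hB)
  omega

lemma surjhyp_two {D : ℤ} (hfund : IsFundamentalDiscriminant D) : SurjHyp 2 D := by
  intro g hg b hb
  obtain ⟨x, y, hxy, hnd⟩ := good_pair_two hfund hg.1
  have hcop : IsCoprime (g.1 * x ^ 2 + g.2.1 * x * y + g.2.2 * y ^ 2) ((2:ℕ):ℤ) := by
    exact_mod_cast coprime_prime_of_not_dvd Nat.prime_two hnd
  exact surj_tail (by norm_num) hg x y hxy hcop b hb

lemma surjhyp_three {D : ℤ} (hfund : IsFundamentalDiscriminant D) : SurjHyp 3 D := by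
  intro g hg b hb
  obtain ⟨x, y, hxy, hnd⟩ := good_pair_three hfund hg.1
  have hcop : IsCoprime (g.1 * x ^ 2 + g.2.1 * x * y + g.2.2 * y ^ 2) ((3:ℕ):ℤ) := by
    exact_mod_cast coprime_prime_of_not_dvd Nat.prime_three hnd
  exact surj_tail (by norm_num) hg x y hxy hcop b hb

lemma surjhyp_six {D : ℤ} (hfund : IsFundamentalDiscriminant D) : SurjHyp 6 D := by
  intro g hg b hb
  obtain ⟨x, y, hxy, hnd2, hnd3⟩ := good_pair_six hfund hg.1
  have hcop2 : IsCoprime (g.1 * x ^ 2 + g.2.1 * x * y + g.2.2 * y ^ 2) (2:ℤ) := by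
    exact_mod_cast coprime_prime_of_not_dvd Nat.prime_two hnd2
  have hcop3 : IsCoprime (g.1 * x ^ 2 + g.2.1 * x * y + g.2.2 * y ^ 2) (3:ℤ) := by
    exact_mod_cast coprime_prime_of_not_dvd Nat.prime_three hnd3
  have hcop : IsCoprime (g.1 * x ^ 2 + g.2.1 * x * y + g.2.2 * y ^ 2) ((6:ℕ):ℤ) := by
    have := IsCoprime.mul_right hcop2 hcop3
    have h6 : ((6:ℕ):ℤ) = 2 * 3 := by norm_num
    rwa [h6]
  exact surj_tail (by norm_num) hg x y hxy hcop b hb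

lemma card_sol_congr (N : ℕ) (hN : 0 < N) (D v : ℤ)
    (h : ∀ x : ℤ, (((4 * N : ℕ) : ℤ) ∣ x - D) ↔ ((x - v) % ((4 * N : ℕ) : ℤ) = 0)) :
    Nat.card (Sol N D)
      = Nat.card {b : ZMod (2 * N) // (((b.val : ℤ) ^ 2 - v) % ((4 * N : ℕ) : ℤ)) = 0} :=
  Nat.card_congr (Equiv.subtypeEquivRight fun b => h _)
/-- For every fundamental discriminant `D < 0`,
`12·H(D) - 8·H₂(D) - 9·H₃(D) + 6·H₆(D)
  = (1 - 2·χ₈(D) - 3·(D|3) + 6·χ₈(D)·(D|3))·H(D)`. -/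
theorem hurwitz_level_six_combination (D : ℤ) (hD : D < 0)
    (hfund : IsFundamentalDiscriminant D) :
    12 * hurwitzCN 1 D - 8 * hurwitzCN 2 D - 9 * hurwitzCN 3 D + 6 * hurwitzCN 6 D
      = ((1 - 2 * chi8 D - 3 * jacobiSym D 3 + 6 * chi8 D * jacobiSym D 3 : ℤ) : ℚ)
          * hurwitzCN 1 D := by
  have hr2 : hurwitzCN 2 D = (Nat.card (Sol 2 D) : ℚ) * hurwitzCN 1 D :=
    hurwitz_rel (by norm_num) hD (keyhyp_two hfund) (surjhyp_two hfund)
  have hr3 : hurwitzCN 3 D = (Nat.card (Sol 3 D) : ℚ) * hurwitzCN 1 D :=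
    hurwitz_rel (by norm_num) hD (keyhyp_three hfund) (surjhyp_three hfund)
  have hr6 : hurwitzCN 6 D = (Nat.card (Sol 6 D) : ℚ) * hurwitzCN 1 D :=
    hurwitz_rel (by norm_num) hD (keyhyp_six hfund) (surjhyp_six hfund)
  have h4 := fund_mod4 hfund
  have h24 : D % 24 = 0 ∨ D % 24 = 1 ∨ D % 24 = 4 ∨ D % 24 = 5 ∨ D % 24 = 8 ∨ D % 24 = 9 ∨
      D % 24 = 12 ∨ D % 24 = 13 ∨ D % 24 = 16 ∨ D % 24 = 17 ∨ D % 24 = 20 ∨ D % 24 = 21 := by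
    omega
  rcases h24 with h|h|h|h|h|h|h|h|h|h|h|h
  · have e2 : Nat.card (Sol 2 D) = 1 := by
      rw [card_sol_congr 2 (by norm_num) D 0 (fun x => by omega), Nat.card_eq_fintype_card]
      decide
    have e3 : Nat.card (Sol 3 D) = 1 := by
      rw [card_sol_congr 3 (by norm_num) D 0 (fun x => by omega), Nat.card_eq_fintype_card]
      decide
    have e6 : Nat.card (Sol 6 D) = 1 := by
      rw [card_sol_congr 6 (by norm_num) D 0 (fun x => by omega), Nat.card_eq_fintype_card]
      decide
    have ec : chi8 D = 0 := by
      unfold chi8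
      rw [if_pos (by omega)]
    have ej : jacobiSym D 3 = 0 := by
      rw [jacobiSym.mod_left D 3, show D % (3:ℕ) = 0 by omega]
      norm_num
    rw [hr2, hr3, hr6, e2, e3, e6, ec, ej]
    push_cast
    ring
  · have e2 : Nat.card (Sol 2 D) = 2 := by
      rw [card_sol_congr 2 (by norm_num) D 1 (fun x => by omega), Nat.card_eq_fintype_card]
      decide
    have e3 : Nat.card (Sol 3 D) = 2 := by
      rw [card_sol_congr 3 (by norm_num) D 1 (fun x => by omega), Nat.card_eq_fintype_card]
      decide
    have e6 : Nat.card (Sol 6 D) = 4 := by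
      rw [card_sol_congr 6 (by norm_num) D 1 (fun x => by omega), Nat.card_eq_fintype_card]
      decide
    have ec : chi8 D = 1 := by
      unfold chi8
      rw [if_neg (by omega), if_pos (by omega)]
    have ej : jacobiSym D 3 = 1 := by
      rw [jacobiSym.mod_left D 3, show D % (3:ℕ) = 1 by omega]
      norm_num
    rw [hr2, hr3, hr6, e2, e3, e6, ec, ej]
    push_cast
    ring
  · have e2 : Nat.card (Sol 2 D) = 1 := by
      rw [card_sol_congr 2 (by norm_num) D 4 (fun x => by omega), Nat.card_eq_fintype_card]
      decide
    have e3 : Nat.card (Sol 3 D) = 2 := by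
      rw [card_sol_congr 3 (by norm_num) D 4 (fun x => by omega), Nat.card_eq_fintype_card]
      decide
    have e6 : Nat.card (Sol 6 D) = 2 := by
      rw [card_sol_congr 6 (by norm_num) D 4 (fun x => by omega), Nat.card_eq_fintype_card]
      decide
    have ec : chi8 D = 0 := by
      unfold chi8
      rw [if_pos (by omega)]
    have ej : jacobiSym D 3 = 1 := by
      rw [jacobiSym.mod_left D 3, show D % (3:ℕ) = 1 by omega]
      norm_num
    rw [hr2, hr3, hr6, e2, e3, e6, ec, ej]
    push_cast
    ring
  · have e2 : Nat.card (Sol 2 D) = 0 := by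
      rw [card_sol_congr 2 (by norm_num) D 5 (fun x => by omega), Nat.card_eq_fintype_card]
      decide
    have e3 : Nat.card (Sol 3 D) = 0 := by
      rw [card_sol_congr 3 (by norm_num) D 5 (fun x => by omega), Nat.card_eq_fintype_card]
      decide
    have e6 : Nat.card (Sol 6 D) = 0 := by
      rw [card_sol_congr 6 (by norm_num) D 5 (fun x => by omega), Nat.card_eq_fintype_card]
      decide
    have ec : chi8 D = -1 := by
      unfold chi8
      rw [if_neg (by omega), if_neg (by omega)]
    have ej : jacobiSym D 3 = -1 := by
      rw [jacobiSym.mod_left D 3, show D % (3:ℕ) = 2 by omega]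
      norm_num
    rw [hr2, hr3, hr6, e2, e3, e6, ec, ej]
    push_cast
    ring
  · have e2 : Nat.card (Sol 2 D) = 1 := by
      rw [card_sol_congr 2 (by norm_num) D 8 (fun x => by omega), Nat.card_eq_fintype_card]
      decide
    have e3 : Nat.card (Sol 3 D) = 0 := by
      rw [card_sol_congr 3 (by norm_num) D 8 (fun x => by omega), Nat.card_eq_fintype_card]
      decide
    have e6 : Nat.card (Sol 6 D) = 0 := by
      rw [card_sol_congr 6 (by norm_num) D 8 (fun x => by omega), Nat.card_eq_fintype_card]
      decide
    have ec : chi8 D = 0 := by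
      unfold chi8
      rw [if_pos (by omega)]
    have ej : jacobiSym D 3 = -1 := by
      rw [jacobiSym.mod_left D 3, show D % (3:ℕ) = 2 by omega]
      norm_num
    rw [hr2, hr3, hr6, e2, e3, e6, ec, ej]
    push_cast
    ring
  · have e2 : Nat.card (Sol 2 D) = 2 := by
      rw [card_sol_congr 2 (by norm_num) D 9 (fun x => by omega), Nat.card_eq_fintype_card]
      decide
    have e3 : Nat.card (Sol 3 D) = 1 := by
      rw [card_sol_congr 3 (by norm_num) D 9 (fun x => by omega), Nat.card_eq_fintype_card]
      decide
    have e6 : Nat.card (Sol 6 D) = 2 := by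
      rw [card_sol_congr 6 (by norm_num) D 9 (fun x => by omega), Nat.card_eq_fintype_card]
      decide
    have ec : chi8 D = 1 := by
      unfold chi8
      rw [if_neg (by omega), if_pos (by omega)]
    have ej : jacobiSym D 3 = 0 := by
      rw [jacobiSym.mod_left D 3, show D % (3:ℕ) = 0 by omega]
      norm_num
    rw [hr2, hr3, hr6, e2, e3, e6, ec, ej]
    push_cast
    ring
  · have e2 : Nat.card (Sol 2 D) = 1 := by
      rw [card_sol_congr 2 (by norm_num) D 12 (fun x => by omega), Nat.card_eq_fintype_card]
      decide
    have e3 : Nat.card (Sol 3 D) = 1 := by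
      rw [card_sol_congr 3 (by norm_num) D 12 (fun x => by omega), Nat.card_eq_fintype_card]
      decide
    have e6 : Nat.card (Sol 6 D) = 1 := by
      rw [card_sol_congr 6 (by norm_num) D 12 (fun x => by omega), Nat.card_eq_fintype_card]
      decide
    have ec : chi8 D = 0 := by
      unfold chi8
      rw [if_pos (by omega)]
    have ej : jacobiSym D 3 = 0 := by
      rw [jacobiSym.mod_left D 3, show D % (3:ℕ) = 0 by omega]
      norm_num
    rw [hr2, hr3, hr6, e2, e3, e6, ec, ej]
    push_cast
    ring
  · have e2 : Nat.card (Sol 2 D) = 0 := by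
      rw [card_sol_congr 2 (by norm_num) D 13 (fun x => by omega), Nat.card_eq_fintype_card]
      decide
    have e3 : Nat.card (Sol 3 D) = 2 := by
      rw [card_sol_congr 3 (by norm_num) D 13 (fun x => by omega), Nat.card_eq_fintype_card]
      decide
    have e6 : Nat.card (Sol 6 D) = 0 := by
      rw [card_sol_congr 6 (by norm_num) D 13 (fun x => by omega), Nat.card_eq_fintype_card]
      decide
    have ec : chi8 D = -1 := by
      unfold chi8
      rw [if_neg (by omega), if_neg (by omega)]
    have ej : jacobiSym D 3 = 1 := by
      rw [jacobiSym.mod_left D 3, show D % (3:ℕ) = 1 by omega]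
      norm_num
    rw [hr2, hr3, hr6, e2, e3, e6, ec, ej]
    push_cast
    ring
  · have e2 : Nat.card (Sol 2 D) = 1 := by
      rw [card_sol_congr 2 (by norm_num) D 16 (fun x => by omega), Nat.card_eq_fintype_card]
      decide
    have e3 : Nat.card (Sol 3 D) = 2 := by
      rw [card_sol_congr 3 (by norm_num) D 16 (fun x => by omega), Nat.card_eq_fintype_card]
      decide
    have e6 : Nat.card (Sol 6 D) = 2 := by
      rw [card_sol_congr 6 (by norm_num) D 16 (fun x => by omega), Nat.card_eq_fintype_card]
      decide
    have ec : chi8 D = 0 := by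
      unfold chi8
      rw [if_pos (by omega)]
    have ej : jacobiSym D 3 = 1 := by
      rw [jacobiSym.mod_left D 3, show D % (3:ℕ) = 1 by omega]
      norm_num
    rw [hr2, hr3, hr6, e2, e3, e6, ec, ej]
    push_cast
    ring
  · have e2 : Nat.card (Sol 2 D) = 2 := by
      rw [card_sol_congr 2 (by norm_num) D 17 (fun x => by omega), Nat.card_eq_fintype_card]
      decide
    have e3 : Nat.card (Sol 3 D) = 0 := by
      rw [card_sol_congr 3 (by norm_num) D 17 (fun x => by omega), Nat.card_eq_fintype_card]
      decide
    have e6 : Nat.card (Sol 6 D) = 0 := by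
      rw [card_sol_congr 6 (by norm_num) D 17 (fun x => by omega), Nat.card_eq_fintype_card]
      decide
    have ec : chi8 D = 1 := by
      unfold chi8
      rw [if_neg (by omega), if_pos (by omega)]
    have ej : jacobiSym D 3 = -1 := by
      rw [jacobiSym.mod_left D 3, show D % (3:ℕ) = 2 by omega]
      norm_num
    rw [hr2, hr3, hr6, e2, e3, e6, ec, ej]
    push_cast
    ring
  · have e2 : Nat.card (Sol 2 D) = 1 := by
      rw [card_sol_congr 2 (by norm_num) D 20 (fun x => by omega), Nat.card_eq_fintype_card]
      decide
    have e3 : Nat.card (Sol 3 D) = 0 := by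
      rw [card_sol_congr 3 (by norm_num) D 20 (fun x => by omega), Nat.card_eq_fintype_card]
      decide
    have e6 : Nat.card (Sol 6 D) = 0 := by
      rw [card_sol_congr 6 (by norm_num) D 20 (fun x => by omega), Nat.card_eq_fintype_card]
      decide
    have ec : chi8 D = 0 := by
      unfold chi8
      rw [if_pos (by omega)]
    have ej : jacobiSym D 3 = -1 := by
      rw [jacobiSym.mod_left D 3, show D % (3:ℕ) = 2 by omega]
      norm_num
    rw [hr2, hr3, hr6, e2, e3, e6, ec, ej]
    push_cast
    ring
  · have e2 : Nat.card (Sol 2 D) = 0 := by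
      rw [card_sol_congr 2 (by norm_num) D 21 (fun x => by omega), Nat.card_eq_fintype_card]
      decide
    have e3 : Nat.card (Sol 3 D) = 1 := by
      rw [card_sol_congr 3 (by norm_num) D 21 (fun x => by omega), Nat.card_eq_fintype_card]
      decide
    have e6 : Nat.card (Sol 6 D) = 0 := by
      rw [card_sol_congr 6 (by norm_num) D 21 (fun x => by omega), Nat.card_eq_fintype_card]
      decide
    have ec : chi8 D = -1 := by
      unfold chi8
      rw [if_neg (by omega), if_neg (by omega)]
    have ej : jacobiSym D 3 = 0 := by
      rw [jacobiSym.mod_left D 3, show D % (3:ℕ) = 0 by omega]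
      norm_num
    rw [hr2, hr3, hr6, e2, e3, e6, ec, ej]
    push_cast
    ring
end

section
/- For every (a,b;c,d) ∈ SL₂(ℤ), every τ ∈ ℍ and every z ∈ ℂ, one has Z⁽³⁾((aτ+b)/(cτ+d), z/(cτ+d)) = e^{4πi c z²/(cτ+d)}·Z⁽³⁾(τ,z); and for all λ, μ ∈ ℤ one has Z⁽³⁾(τ, z + λτ + μ) = e^{−4πi(λ²τ + 2λz)}·Z⁽³⁾(τ,z). That is, Z⁽³⁾ is a (weakly holomorphic) Jacobi form of weight 0 and index 2 for SL₂(ℤ). -/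
open Complex

/-- The theta series `θ_{m,r}(τ,z) = Σ_{s ≡ r mod 2m} q^{s²/4m} yˢ`, with
`q = e^{2πiτ}`, `y = e^{2πiz}`. -/
noncomputable def jacTheta (m : ℕ) (r : ℤ) (τ z : ℂ) : ℂ :=
  ∑' s : ℤ,
    if s % (2 * (m : ℤ)) = r % (2 * (m : ℤ)) then
      Complex.exp (2 * Real.pi * I * (((s : ℂ) ^ 2 / (4 * (m : ℂ))) * τ + (s : ℂ) * z))
    else 0

/-- The Jacobi theta function `ϑ₁(τ,z) = -θ_{1,1}(τ/2, (z+1/2)/2)`. -/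
noncomputable def theta1 (τ z : ℂ) : ℂ := -jacTheta 1 1 (τ / 2) ((z + 1 / 2) / 2)

/-- The Jacobi theta function `ϑ₂(τ,z) = θ_{1,1}(τ/2, z/2)`. -/
noncomputable def theta2 (τ z : ℂ) : ℂ := jacTheta 1 1 (τ / 2) (z / 2)

/-- The Jacobi theta function `ϑ₃(τ,z) = θ_{1,0}(τ/2, z/2)`. -/
noncomputable def theta3 (τ z : ℂ) : ℂ := jacTheta 1 0 (τ / 2) (z / 2)

/-- The Jacobi theta function `ϑ₄(τ,z) = θ_{1,0}(τ/2, (z+1/2)/2)`. -/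
noncomputable def theta4 (τ z : ℂ) : ℂ := jacTheta 1 0 (τ / 2) ((z + 1 / 2) / 2)

/-- The weight `0`, index `2` weakly holomorphic Jacobi form `Z⁽³⁾` of umbral
moonshine at `ℓ = 3`. -/
noncomputable def Z3 (τ z : ℂ) : ℂ :=
  4 * (theta2 τ z ^ 2 * theta3 τ z ^ 2 / (theta2 τ 0 ^ 2 * theta3 τ 0 ^ 2) +
       theta3 τ z ^ 2 * theta4 τ z ^ 2 / (theta3 τ 0 ^ 2 * theta4 τ 0 ^ 2) +
       theta4 τ z ^ 2 * theta2 τ z ^ 2 / (theta4 τ 0 ^ 2 * theta2 τ 0 ^ 2))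

/-!
With the theta functions with characteristics `ϑ[a,b](τ,z) = Σₙ e^{πi(n+a)²τ + 2πi(n+a)(z+b)}`
one has `ϑ₂ = ϑ[½,0]`, `ϑ₃ = ϑ[0,0]`, `ϑ₄ = ϑ[0,½]`, and `Z⁽³⁾ = 4(r₂r₃ + r₃r₄ + r₄r₂)` with
`rᵢ(τ,z) = (ϑᵢ(τ,z)/ϑᵢ(τ,0))²`. In these quotients the weight-½ factor of the inversion formula
and the roots of unity of `τ ↦ τ + 1` cancel: `T` fixes `r₂` and swaps `r₃, r₄`, while `S`
multiplies every `rᵢ` by `e^{2πiz²/τ}` after fixing `r₃` and swapping `r₂, r₄`. Since the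
characteristics are half-integral, every `rᵢ` picks up the same factor `e^{-2πi(λ²τ+2λz)}` under
`z ↦ z + λτ + μ`. Invariance under `S` and `T` extends to `SL₂(ℤ)` because the automorphy factor
`e^{2πi m c z²/(cτ+d)}` is a cocycle.
-/

open scoped Real

lemma tsum_ite_emod_eq {α : Type*} [AddCommMonoid α] [TopologicalSpace α] (f : ℤ → α) {N : ℤ}
    (hN : N ≠ 0) (r : ℤ) :
    ∑' s : ℤ, (if s % N = r % N then f s else 0) = ∑' n : ℤ, f (r + N * n) := by
  have hinj : Function.Injective (fun n : ℤ => r + N * n) := fun a b h => by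
    simpa [hN] using h
  rw [← hinj.tsum_eq]
  · exact tsum_congr fun n => if_pos (Int.add_mul_emod_self_left r N n)
  · intro s hs
    have hrs : r ≡ s [ZMOD N] := by
      by_contra h
      exact hs (if_neg fun e => h e.symm)
    obtain ⟨k, hk⟩ := hrs.dvd
    exact ⟨k, by simp only; omega⟩

lemma jacTheta_eq_tsum {m : ℕ} (hm : m ≠ 0) (r : ℤ) (τ z : ℂ) :
    jacTheta m r τ z = ∑' n : ℤ, cexp (2 * π * I *
      (((r + 2 * m * n : ℤ) : ℂ) ^ 2 / (4 * m) * τ + ((r + 2 * m * n : ℤ) : ℂ) * z)) :=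
  tsum_ite_emod_eq _ (by positivity) r

lemma jacobiTheta₂_add_nat_mul (w τ : ℂ) (n : ℕ) :
    jacobiTheta₂ (w + n * τ) τ = cexp (-π * I * (n ^ 2 * τ + 2 * n * w)) * jacobiTheta₂ w τ := by
  induction n with
  | zero => simp
  | succ n ih =>
    rw [Nat.cast_succ, add_one_mul, ← add_assoc, jacobiTheta₂_add_left', ih, ← mul_assoc,
      ← exp_add]
    congr 2
    ring

lemma jacobiTheta₂_add_int_mul_add_int (w τ : ℂ) (j k : ℤ) :
    jacobiTheta₂ (w + j * τ + k) τ =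
      cexp (-π * I * (j ^ 2 * τ + 2 * j * w)) * jacobiTheta₂ w τ := by
  have hperiodic : Function.Periodic (jacobiTheta₂ · τ) 1 := (jacobiTheta₂_add_left · τ)
  have hk := hperiodic.int_mul k (w + j * τ)
  rw [mul_one] at hk
  rw [hk]
  obtain ⟨n, rfl | rfl⟩ := Int.eq_nat_or_neg j
  · exact_mod_cast jacobiTheta₂_add_nat_mul w τ n
  · rw [← jacobiTheta₂_neg_left, ← jacobiTheta₂_neg_left w,
      show -(w + ((-n : ℤ) : ℂ) * τ) = -w + n * τ by push_cast; ring, jacobiTheta₂_add_nat_mul]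
    congr 2
    push_cast
    ring

lemma jacobiTheta₂_add_one_right (z τ : ℂ) :
    jacobiTheta₂ z (τ + 1) = jacobiTheta₂ (z + 1 / 2) τ := by
  refine tsum_congr fun n => ?_
  obtain ⟨k, hk⟩ : Even (n * (n - 1)) := Int.even_mul_pred_self n
  have hk' : (n : ℂ) * (n - 1) = k + k := by exact_mod_cast hk
  rw [jacobiTheta₂_term, jacobiTheta₂_term,
    show 2 * π * I * n * z + π * I * n ^ 2 * (τ + 1)
      = 2 * π * I * n * (z + 1 / 2) + π * I * n ^ 2 * τ + k * (2 * π * I) by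
      linear_combination π * I * hk',
    exp_add _ (k * _), exp_int_mul_two_pi_mul_I, mul_one]

lemma neg_I_mul_cpow_half_ne_zero {τ : ℂ} (hτ : τ ≠ 0) : (-I * τ) ^ (1 / 2 : ℂ) ≠ 0 := by
  simp [cpow_eq_zero_iff, hτ]

lemma jacobiTheta₂_neg_one_div {τ : ℂ} (hτ : τ ≠ 0) (w : ℂ) :
    jacobiTheta₂ w (-1 / τ) =
      (-I * τ) ^ (1 / 2 : ℂ) * cexp (π * I * w ^ 2 * τ) * jacobiTheta₂ (w * τ) τ := by
  have hroot := neg_I_mul_cpow_half_ne_zero hτ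
  rw [jacobiTheta₂_functional_equation (w * τ) τ, mul_div_cancel_right₀ w hτ,
    show -π * I * (w * τ) ^ 2 / τ = -(π * I * w ^ 2 * τ) by field_simp, exp_neg]
  field_simp

noncomputable def thetaChar (a b τ z : ℂ) : ℂ :=
  cexp (π * I * a ^ 2 * τ + 2 * π * I * a * (z + b)) * jacobiTheta₂ (z + b + a * τ) τ

lemma thetaChar_eq_tsum (a b τ z : ℂ) : thetaChar a b τ z =
    ∑' n : ℤ, cexp (π * I * (n + a) ^ 2 * τ + 2 * π * I * (n + a) * (z + b)) := by
  rw [thetaChar, jacobiTheta₂, ← tsum_mul_left]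
  refine tsum_congr fun n => ?_
  rw [jacobiTheta₂_term, ← exp_add]
  ring_nf

lemma thetaChar_apply_add (a b c τ z : ℂ) : thetaChar a b τ (z + c) = thetaChar a (b + c) τ z := by
  simp only [thetaChar, add_assoc, add_comm c]

lemma jacTheta_one_eq_thetaChar (r : ℤ) (τ z : ℂ) :
    jacTheta 1 r (τ / 2) (z / 2) = thetaChar (r / 2) 0 τ z := by
  rw [jacTheta_eq_tsum one_ne_zero, thetaChar_eq_tsum]
  refine tsum_congr fun n => ?_
  push_cast
  ring_nf

lemma theta2_eq_thetaChar : theta2 = thetaChar (1 / 2) 0 := by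
  ext τ z
  simpa [theta2] using jacTheta_one_eq_thetaChar 1 τ z

lemma theta3_eq_thetaChar : theta3 = thetaChar 0 0 := by
  ext τ z
  simpa [theta3] using jacTheta_one_eq_thetaChar 0 τ z

lemma theta4_eq_thetaChar : theta4 = thetaChar 0 (1 / 2) := by
  ext τ z
  change theta3 τ (z + 1 / 2) = _
  rw [theta3_eq_thetaChar, thetaChar_apply_add, zero_add]

lemma thetaChar_add_int_mul_add_int (a b τ z : ℂ) (j k : ℤ) :
    thetaChar a b τ (z + j * τ + k) = cexp (2 * π * I * (a * k - b * j)) *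
      cexp (-π * I * (j ^ 2 * τ + 2 * j * z)) * thetaChar a b τ z := by
  rw [thetaChar, thetaChar, show z + j * τ + k + b + a * τ = z + b + a * τ + j * τ + k by ring,
    jacobiTheta₂_add_int_mul_add_int]
  simp only [← mul_assoc, ← exp_add]
  congr 2
  ring

lemma thetaChar_tau_add_one (a b τ z : ℂ) :
    thetaChar a b (τ + 1) z = cexp (-π * I * a * (a + 1)) * thetaChar a (a + b + 1 / 2) τ z := by
  rw [thetaChar, thetaChar, jacobiTheta₂_add_one_right,
    show z + b + a * (τ + 1) + 1 / 2 = z + (a + b + 1 / 2) + a * τ by ring, ← mul_assoc,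
    ← exp_add]
  congr 2
  ring

lemma thetaChar_neg_one_div {τ : ℂ} (hτ : τ ≠ 0) (a b z : ℂ) :
    thetaChar a b (-1 / τ) (z / τ) = (-I * τ) ^ (1 / 2 : ℂ) * cexp (2 * π * I * a * b) *
      (cexp (π * I * z ^ 2 / τ) * thetaChar b (-a) τ z) := by
  rw [thetaChar, thetaChar, jacobiTheta₂_neg_one_div hτ,
    show (z / τ + b + a * (-1 / τ)) * τ = z + -a + b * τ by field_simp; ring]
  have hexp : cexp (π * I * a ^ 2 * (-1 / τ) + 2 * π * I * a * (z / τ + b)) *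
      cexp (π * I * (z / τ + b + a * (-1 / τ)) ^ 2 * τ) = cexp (2 * π * I * a * b) *
      cexp (π * I * z ^ 2 / τ) * cexp (π * I * b ^ 2 * τ + 2 * π * I * b * (z + -a)) := by
    simp only [← exp_add]
    congr 1
    field_simp
    ring
  linear_combination ((-I * τ) ^ (1 / 2 : ℂ) * jacobiTheta₂ (z + -a + b * τ) τ) * hexp

noncomputable def thetaRatioSq (a b τ z : ℂ) : ℂ := (thetaChar a b τ z / thetaChar a b τ 0) ^ 2

lemma thetaRatioSq_snd_add_int (a b : ℂ) (n : ℤ) (τ z : ℂ) :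
    thetaRatioSq a (b + n) τ z = thetaRatioSq a b τ z := by
  have hshift (w : ℂ) :
      thetaChar a (b + n) τ w = cexp (2 * π * I * (a * n)) * thetaChar a b τ w := by
    rw [← thetaChar_apply_add]
    simpa using thetaChar_add_int_mul_add_int a b τ w 0 n
  rw [thetaRatioSq, thetaRatioSq, hshift, hshift, mul_div_mul_left _ _ (exp_ne_zero _)]

lemma thetaRatioSq_tau_add_one (a b τ z : ℂ) :
    thetaRatioSq a b (τ + 1) z = thetaRatioSq a (a + b + 1 / 2) τ z := by
  rw [thetaRatioSq, thetaRatioSq, thetaChar_tau_add_one, thetaChar_tau_add_one,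
    mul_div_mul_left _ _ (exp_ne_zero _)]

lemma thetaRatioSq_neg_one_div {τ : ℂ} (hτ : τ ≠ 0) (a b z : ℂ) :
    thetaRatioSq a b (-1 / τ) (z / τ) =
      cexp (2 * π * I * z ^ 2 / τ) * thetaRatioSq b (-a) τ z := by
  have h0 := thetaChar_neg_one_div hτ a b 0
  rw [zero_div, zero_pow two_ne_zero, mul_zero, zero_div, exp_zero, one_mul] at h0
  have hK : (-I * τ) ^ (1 / 2 : ℂ) * cexp (2 * π * I * a * b) ≠ 0 :=
    mul_ne_zero (neg_I_mul_cpow_half_ne_zero hτ) (exp_ne_zero _)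
  rw [thetaRatioSq, thetaRatioSq, thetaChar_neg_one_div hτ, h0, mul_div_mul_left _ _ hK,
    mul_div_assoc, mul_pow, ← exp_nat_mul]
  congr 2
  ring

lemma thetaRatioSq_add_int_mul_add_int (a b : ℂ) {p q : ℤ} (ha : 2 * a = p) (hb : 2 * b = q)
    (τ z : ℂ) (j k : ℤ) :
    thetaRatioSq a b τ (z + j * τ + k) =
      cexp (-(2 * π * I) * (j ^ 2 * τ + 2 * j * z)) * thetaRatioSq a b τ z := by
  have hroot : cexp (2 * π * I * (a * k - b * j)) ^ 2 = 1 := by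
    rw [← exp_nat_mul, show ((2 : ℕ) : ℂ) * (2 * π * I * (a * k - b * j))
        = (p * k - q * j : ℤ) * (2 * π * I) by push_cast; rw [← ha, ← hb]; ring,
      exp_int_mul_two_pi_mul_I]
  rw [thetaRatioSq, thetaRatioSq, thetaChar_add_int_mul_add_int, mul_div_assoc, mul_pow,
    mul_pow, hroot, one_mul, ← exp_nat_mul]
  congr 2
  push_cast
  ring

lemma Z3_eq_thetaRatioSq (τ z : ℂ) :
    Z3 τ z = 4 * (thetaRatioSq (1 / 2) 0 τ z * thetaRatioSq 0 0 τ z +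
      thetaRatioSq 0 0 τ z * thetaRatioSq 0 (1 / 2) τ z +
      thetaRatioSq 0 (1 / 2) τ z * thetaRatioSq (1 / 2) 0 τ z) := by
  simp only [Z3, thetaRatioSq, theta2_eq_thetaChar, theta3_eq_thetaChar, theta4_eq_thetaChar,
    div_pow, mul_div_mul_comm]

lemma Z3_tau_add_one (τ z : ℂ) : Z3 (τ + 1) z = Z3 τ z := by
  have h2 : thetaRatioSq (1 / 2) (1 / 2 + 0 + 1 / 2) τ z = thetaRatioSq (1 / 2) 0 τ z := by
    rw [show (1 / 2 : ℂ) + 0 + 1 / 2 = 0 + (1 : ℤ) by norm_num, thetaRatioSq_snd_add_int]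
  have h4 : thetaRatioSq 0 (0 + 1 / 2 + 1 / 2) τ z = thetaRatioSq 0 0 τ z := by
    rw [show (0 : ℂ) + 1 / 2 + 1 / 2 = 0 + (1 : ℤ) by norm_num, thetaRatioSq_snd_add_int]
  rw [Z3_eq_thetaRatioSq, Z3_eq_thetaRatioSq, thetaRatioSq_tau_add_one, thetaRatioSq_tau_add_one,
    thetaRatioSq_tau_add_one, h2, h4, add_zero, zero_add]
  ring

lemma Z3_neg_one_div {τ : ℂ} (hτ : τ ≠ 0) (z : ℂ) :
    Z3 (-1 / τ) (z / τ) = cexp (4 * π * I * z ^ 2 / τ) * Z3 τ z := by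
  have h4 : thetaRatioSq 0 (-(1 / 2)) τ z = thetaRatioSq 0 (1 / 2) τ z := by
    rw [← thetaRatioSq_snd_add_int 0 (-(1 / 2)) 1]
    norm_num
  have hsq : cexp (4 * π * I * z ^ 2 / τ) = cexp (2 * π * I * z ^ 2 / τ) ^ 2 := by
    rw [← exp_nat_mul]
    ring_nf
  rw [Z3_eq_thetaRatioSq, Z3_eq_thetaRatioSq, thetaRatioSq_neg_one_div hτ,
    thetaRatioSq_neg_one_div hτ, thetaRatioSq_neg_one_div hτ, neg_zero, h4, hsq]
  ring

lemma Z3_add_int_mul_add_int (τ z : ℂ) (j k : ℤ) :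
    Z3 τ (z + j * τ + k) = cexp (-(4 * π * I) * (j ^ 2 * τ + 2 * j * z)) * Z3 τ z := by
  have hsq : cexp (-(4 * π * I) * (j ^ 2 * τ + 2 * j * z)) =
      cexp (-(2 * π * I) * (j ^ 2 * τ + 2 * j * z)) ^ 2 := by
    rw [← exp_nat_mul]
    ring_nf
  rw [Z3_eq_thetaRatioSq, Z3_eq_thetaRatioSq, hsq,
    thetaRatioSq_add_int_mul_add_int (1 / 2) 0 (p := 1) (q := 0) (by norm_num) (by norm_num),
    thetaRatioSq_add_int_mul_add_int 0 0 (p := 0) (q := 0) (by norm_num) (by norm_num),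
    thetaRatioSq_add_int_mul_add_int 0 (1 / 2) (p := 0) (q := 1) (by norm_num) (by norm_num)]
  ring

section JacobiInvariance

open UpperHalfPlane hiding I
open ModularGroup EisensteinSeries MatrixGroups ModularForm

/-- `D2 γ τ = 2πi c / (cτ + d)`, so the factor is `e^{2πi m c z²/(cτ+d)}`, and `D2_mul` is its
cocycle relation. -/
def IsJacobiInvariant (m : ℂ) (φ : ℂ → ℂ → ℂ) (γ : SL(2, ℤ)) : Prop :=
  ∀ (τ : ℍ) (z : ℂ), φ ↑(γ • τ) (z / denom γ τ) = cexp (m * z ^ 2 * D2 γ τ) * φ τ z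

lemma denom_SL_mul (A B : SL(2, ℤ)) (τ : ℍ) :
    denom (A * B : SL(2, ℤ)) τ = denom A ↑(B • τ) * denom B τ := by
  simpa [σ] using denom_cocycle_σ A B τ

lemma D2_mul_apply (A B : SL(2, ℤ)) (τ : ℍ) :
    D2 (A * B) τ = D2 A (B • τ) / denom B τ ^ 2 + D2 B τ := by
  simp [D2_mul, SL_slash_apply, div_eq_mul_inv]

variable {m : ℂ} {φ : ℂ → ℂ → ℂ}

lemma isJacobiInvariant_one : IsJacobiInvariant m φ 1 := by
  intro τ z
  simp [D2_one]

lemma IsJacobiInvariant.mul {A B : SL(2, ℤ)} (hA : IsJacobiInvariant m φ A)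
    (hB : IsJacobiInvariant m φ B) : IsJacobiInvariant m φ (A * B) := by
  intro τ z
  have hB0 := denom_ne_zero B τ
  rw [mul_smul, denom_SL_mul, div_mul_eq_div_div_swap, hA, hB, ← mul_assoc, ← exp_add,
    D2_mul_apply]
  congr 2
  field_simp

lemma IsJacobiInvariant.inv {A : SL(2, ℤ)} (hA : IsJacobiInvariant m φ A) :
    IsJacobiInvariant m φ A⁻¹ := by
  intro τ z
  have hcocycle : denom A ↑(A⁻¹ • τ) * denom (A⁻¹ : SL(2, ℤ)) τ = 1 := by
    rw [← denom_SL_mul, mul_inv_cancel]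
    simp
  have h := hA (A⁻¹ • τ) (z / denom (A⁻¹ : SL(2, ℤ)) τ)
  rw [smul_inv_smul, div_div, mul_comm, hcocycle, div_one] at h
  have hexp : m * (z / denom (A⁻¹ : SL(2, ℤ)) τ) ^ 2 * D2 A (A⁻¹ • τ) =
      -(m * z ^ 2 * D2 A⁻¹ τ) := by
    rw [← mul_neg, ← Pi.neg_apply, ← D2_inv, SL_slash_apply, zpow_neg, zpow_ofNat]
    ring
  rw [h, ← mul_assoc, ← exp_add, hexp, add_neg_cancel, exp_zero, one_mul]

def jacobiInvarianceSubgroup (m : ℂ) (φ : ℂ → ℂ → ℂ) : Subgroup SL(2, ℤ) where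
  carrier := {γ | IsJacobiInvariant m φ γ}
  one_mem' := isJacobiInvariant_one
  mul_mem' := IsJacobiInvariant.mul
  inv_mem' := IsJacobiInvariant.inv

lemma isJacobiInvariant_of_S_of_T (hS : IsJacobiInvariant m φ S) (hT : IsJacobiInvariant m φ T)
    (γ : SL(2, ℤ)) : IsJacobiInvariant m φ γ := by
  have hle : ⊤ ≤ jacobiInvarianceSubgroup m φ := by
    rw [← SpecialLinearGroup.SL2Z_generators, Subgroup.closure_le]
    rintro _ (rfl | rfl) <;> assumption
  exact hle (Subgroup.mem_top γ)

lemma IsJacobiInvariant.apply_of_im_pos {γ : SL(2, ℤ)} (h : IsJacobiInvariant m φ γ) {τ : ℂ}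
    (hτ : 0 < τ.im) (z : ℂ) :
    φ ((γ 0 0 * τ + γ 0 1) / (γ 1 0 * τ + γ 1 1)) (z / (γ 1 0 * τ + γ 1 1)) =
      cexp (m * z ^ 2 * (2 * π * I * γ 1 0 / (γ 1 0 * τ + γ 1 1))) * φ τ z := by
  have hγ := h ⟨τ, hτ⟩ z
  rw [D2, denom_apply, coe_specialLinearGroup_apply] at hγ
  simpa using hγ

lemma isJacobiInvariant_Z3 (γ : SL(2, ℤ)) : IsJacobiInvariant 2 Z3 γ := by
  refine isJacobiInvariant_of_S_of_T (fun τ z => ?_) (fun τ z => ?_) γ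
  · have hS : (↑(S • τ) : ℂ) = -1 / τ := by
      simp [-sl_moeb, modular_S_smul]
      ring
    rw [hS, denom_S, D2_S, Z3_neg_one_div τ.ne_zero]
    congr 2
    ring
  · have hT : (↑(T • τ) : ℂ) = τ + 1 := by
      simp [-sl_moeb, modular_T_smul]
      ring
    have hdenom : denom T τ = 1 := by
      rw [denom_apply]
      simp [T]
    rw [hT, hdenom, div_one, D2_T, Pi.zero_apply, mul_zero, exp_zero, one_mul, Z3_tau_add_one]

end JacobiInvariance

/-- `Z⁽³⁾` is a (weakly holomorphic) Jacobi form of weight `0` and index `2`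
for `SL₂(ℤ)`: for every `(a,b;c,d) ∈ SL₂(ℤ)`, every `τ ∈ ℍ` and every `z ∈ ℂ`,
`Z⁽³⁾((aτ+b)/(cτ+d), z/(cτ+d)) = e^{4πi c z²/(cτ+d)}·Z⁽³⁾(τ,z)`, and for all
`λ, μ ∈ ℤ`, `Z⁽³⁾(τ, z+λτ+μ) = e^{-4πi(λ²τ+2λz)}·Z⁽³⁾(τ,z)`. -/
theorem Z3_jacobiForm :
    (∀ γ : Matrix.SpecialLinearGroup (Fin 2) ℤ, ∀ τ z : ℂ, 0 < τ.im →
      (let a : ℂ := (((γ : Matrix (Fin 2) (Fin 2) ℤ) 0 0 : ℤ) : ℂ)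
       let b : ℂ := (((γ : Matrix (Fin 2) (Fin 2) ℤ) 0 1 : ℤ) : ℂ)
       let c : ℂ := (((γ : Matrix (Fin 2) (Fin 2) ℤ) 1 0 : ℤ) : ℂ)
       let d : ℂ := (((γ : Matrix (Fin 2) (Fin 2) ℤ) 1 1 : ℤ) : ℂ)
       Z3 ((a * τ + b) / (c * τ + d)) (z / (c * τ + d))
         = Complex.exp (4 * Real.pi * I * c * z ^ 2 / (c * τ + d)) * Z3 τ z)) ∧
    (∀ τ z : ℂ, 0 < τ.im → ∀ lam mu : ℤ,
      Z3 τ (z + (lam : ℂ) * τ + (mu : ℂ))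
        = Complex.exp (-(4 * Real.pi * I) * ((lam : ℂ) ^ 2 * τ + 2 * (lam : ℂ) * z)) *
            Z3 τ z) := by
  refine ⟨fun γ τ z hτ => ?_, fun τ z _ lam mu => Z3_add_int_mul_add_int τ z lam mu⟩
  convert (isJacobiInvariant_Z3 γ).apply_of_im_pos hτ z using 3
  ring
end
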